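/- arXiv:2603.05206 — 14 statements merged into one kernel-verified Lean document; each statement's English description precedes it below -/
import Mathlib

section
/- Let C ⊊ X be a closed convex set in a finite-dimensional normed space, and let v ≠ 0 be an asymptotic direction of C. Then v belongs to the recession cone of C. -/
/-!
If points `y t ∈ C` stay within bounded distance of the ray `x₀ + t • v`, then `t⁻¹ • y t → v`.
For `c ∈ C` and `s ≥ 0`, the points `c + (s / t) • (y t - c)` lie in `C` by convexity once
`t ≥ s`, and they converge to `c + s • v`; since `C` is closed, `c + s • v ∈ C`.
-/

def IsAsymptoticDir {X : Type*} [NormedAddCommGroup X] [NormedSpace ℝ X]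
    (C : Set X) (v : X) : Prop :=
  v ≠ 0 ∧ ∃ x₀ : X,
    (∀ t : ℝ, 0 ≤ t → x₀ + t • v ∉ interior C) ∧
    Filter.Tendsto (fun t : ℝ => Metric.infDist (x₀ + t • v) C) Filter.atTop (nhds 0)

open Filter Topology Metric

section

variable {X : Type*} [NormedAddCommGroup X] [NormedSpace ℝ X] {C : Set X}

theorem Convex.add_smul_mem_of_tendsto_inv_smul {ι : Type*} {l : Filter ι} [l.NeBot]
    (hclosed : IsClosed C) (hconv : Convex ℝ C) {c v : X} (hc : c ∈ C) {s : ℝ} (hs : 0 ≤ s)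
    {t : ι → ℝ} {y : ι → X} (ht : Tendsto t l atTop) (hy : ∀ᶠ i in l, y i ∈ C)
    (hyv : Tendsto (fun i => (t i)⁻¹ • y i) l (𝓝 v)) :
    c + s • v ∈ C := by
  have hmem : ∀ᶠ i in l, c + (s * (t i)⁻¹) • (y i - c) ∈ C := by
    filter_upwards [hy, ht.eventually_ge_atTop s, ht.eventually_gt_atTop 0] with i hyi hsi hti
    refine hconv.add_smul_sub_mem hc hyi ⟨by positivity, ?_⟩
    rw [← div_eq_mul_inv]
    exact div_le_one_of_le₀ hsi hti.le
  have hlim : Tendsto (fun i => c + (s * (t i)⁻¹) • (y i - c)) l (𝓝 (c + s • v)) := by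
    have hinv : Tendsto (fun i => (t i)⁻¹) l (𝓝 0) := tendsto_inv_atTop_zero.comp ht
    have hsplit : ∀ i, c + (s * (t i)⁻¹) • (y i - c)
        = c + s • ((t i)⁻¹ • y i) - (s * (t i)⁻¹) • c := fun i => by
      rw [smul_sub, mul_smul]
      abel
    simp_rw [hsplit]
    simpa using (tendsto_const_nhds.add (hyv.const_smul s)).sub
      ((hinv.const_mul s).smul_const c)
  exact hclosed.mem_of_tendsto hlim hmem

theorem exists_tendsto_inv_smul_of_isBoundedUnder_infDist (hC : C.Nonempty) {x₀ v : X}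
    (hbdd : IsBoundedUnder (· ≤ ·) atTop fun t : ℝ => infDist (x₀ + t • v) C) :
    ∃ y : ℝ → X, (∀ t, y t ∈ C) ∧ Tendsto (fun t => t⁻¹ • y t) atTop (𝓝 v) := by
  have hnear (t : ℝ) : ∃ y ∈ C, dist (x₀ + t • v) y < infDist (x₀ + t • v) C + 1 :=
    (infDist_lt_iff hC).1 (lt_add_one _)
  choose y hyC hyd using hnear
  refine ⟨y, hyC, ?_⟩
  obtain ⟨R, hR⟩ := hbdd
  rw [eventually_map] at hR
  have hgap : IsBoundedUnder (· ≤ ·) atTop (norm ∘ fun t => y t - (x₀ + t • v)) := by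
    refine isBoundedUnder_of_eventually_le (a := R + 1) ?_
    filter_upwards [hR] with t ht
    rw [Function.comp_apply, ← dist_eq_norm, dist_comm]
    linarith [hyd t]
  have hdecomp : ∀ᶠ t : ℝ in atTop,
      t⁻¹ • (y t - (x₀ + t • v)) + t⁻¹ • x₀ + v = t⁻¹ • y t := by
    filter_upwards [eventually_ne_atTop 0] with t ht
    rw [smul_sub, smul_add, smul_smul, inv_mul_cancel₀ ht, one_smul]
    abel
  refine Tendsto.congr' hdecomp ?_
  simpa using ((tendsto_inv_atTop_zero.zero_smul_isBoundedUnder_le hgap).add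
    (tendsto_inv_atTop_zero.smul_const x₀)).add_const v

end

theorem stmt_1_general {X : Type*} [NormedAddCommGroup X] [NormedSpace ℝ X]
    (C : Set X) (hclosed : IsClosed C) (hconv : Convex ℝ C)
    (v : X) (hv : IsAsymptoticDir C v) :
    {x : X | ∃ c ∈ C, ∃ t : ℝ, 0 ≤ t ∧ x = c + t • v} = C := by
  obtain ⟨-, x₀, -, hlim⟩ := hv
  refine Set.Subset.antisymm ?_ fun x hx => ⟨x, hx, 0, le_rfl, by simp⟩
  rintro _ ⟨c, hc, s, hs, rfl⟩
  obtain ⟨y, hyC, hyv⟩ :=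
    exists_tendsto_inv_smul_of_isBoundedUnder_infDist ⟨c, hc⟩ hlim.isBoundedUnder_le
  exact hconv.add_smul_mem_of_tendsto_inv_smul hclosed hc hs tendsto_id
    (Eventually.of_forall hyC) hyv

theorem stmt_1 {X : Type*} [NormedAddCommGroup X] [NormedSpace ℝ X]
    [FiniteDimensional ℝ X]
    (C : Set X) (hclosed : IsClosed C) (hconv : Convex ℝ C) (hne : C ≠ Set.univ)
    (hint : (interior C).Nonempty)
    (v : X) (hv : IsAsymptoticDir C v) :
    {x : X | ∃ c ∈ C, ∃ t : ℝ, 0 ≤ t ∧ x = c + t • v} = C :=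
  stmt_1_general C hclosed hconv v hv
end

section
/- Let C ⊊ X be a closed convex set with nonempty interior, v an asymptotic direction of C witnessed by x₀ (i.e., (x₀ + ℝ₊ v) ∩ int C = ∅ and d(x₀ + t v, C) → 0 as t → +∞). Then the full line x₀ + ℝ v does not intersect int C. -/
theorem stmt_2 {X : Type*} [NormedAddCommGroup X] [NormedSpace ℝ X]
    (C : Set X) (hclosed : IsClosed C) (hconv : Convex ℝ C) (hne : C ≠ Set.univ)
    (hint : (interior C).Nonempty)
    (v : X) (hv : v ≠ 0) (x₀ : X)
    (h1 : ∀ t : ℝ, 0 ≤ t → x₀ + t • v ∉ interior C)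
    (h2 : Filter.Tendsto (fun t : ℝ => Metric.infDist (x₀ + t • v) C)
      Filter.atTop (nhds 0)) :
    ∀ t : ℝ, x₀ + t • v ∉ interior C := by
  intro t ht
  rcases le_or_gt 0 t with hle | hlt
  · exact h1 t hle ht
  · set p := x₀ + t • v with hp
    have hpC : p ∈ C := interior_subset ht
    have hCne : C.Nonempty := ⟨p, hpC⟩
    set w := x₀ + (-t) • v with hw
    -- w ∈ C
    have hwC : w ∈ C := by
      have h0 : Metric.infDist w C ≤ 0 := by
        have htend : Filter.Tendsto
            (fun s : ℝ => (-2 * t) / (s - t) * (Metric.infDist (x₀ + s • v) C + 1))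
            Filter.atTop (nhds 0) := by
          have hA : Filter.Tendsto (fun s : ℝ => (-2 * t) / (s - t))
              Filter.atTop (nhds 0) := by
            apply Filter.Tendsto.div_atTop (tendsto_const_nhds)
            exact Filter.tendsto_atTop_add_const_right _ (-t) Filter.tendsto_id
          have hB : Filter.Tendsto (fun s : ℝ => Metric.infDist (x₀ + s • v) C + 1)
              Filter.atTop (nhds 1) := by
            have := h2.add (tendsto_const_nhds (x := (1:ℝ)))
            simpa only [zero_add] using this
          simpa using hA.mul hB
        refine ge_of_tendsto htend ?_
        filter_upwards [Filter.eventually_ge_atTop (1 - t)] with s hs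
        have hst : (0:ℝ) < s - t := by linarith
        have hst' : s - t ≠ 0 := ne_of_gt hst
        set a : ℝ := (s + t) / (s - t) with ha
        set b : ℝ := (-2 * t) / (s - t) with hb
        have ha0 : 0 ≤ a := div_nonneg (by linarith) hst.le
        have hb0 : 0 ≤ b := div_nonneg (by linarith) hst.le
        have hab : a + b = 1 := by rw [ha, hb]; field_simp; ring
        -- choose c ∈ C close to x₀ + s • v
        obtain ⟨c, hcC, hc⟩ := (Metric.infDist_lt_iff hCne).1
          (lt_add_of_pos_right (Metric.infDist (x₀ + s • v) C) one_pos)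
        have hq : a • p + b • c ∈ C := hconv hpC hcC ha0 hb0 hab
        have hkey : w - (a • p + b • c) = b • ((x₀ + s • v) - c) := by
          rw [hw, hp, ha, hb]
          match_scalars <;> (field_simp; try ring)
        calc Metric.infDist w C ≤ dist w (a • p + b • c) :=
              Metric.infDist_le_dist_of_mem hq
          _ = ‖w - (a • p + b • c)‖ := by rw [dist_eq_norm]
          _ = b * ‖(x₀ + s • v) - c‖ := by
              rw [hkey, norm_smul, Real.norm_eq_abs, abs_of_nonneg hb0]
          _ ≤ b * (Metric.infDist (x₀ + s • v) C + 1) := by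
              apply mul_le_mul_of_nonneg_left _ hb0
              rw [← dist_eq_norm]
              exact hc.le
      have : Metric.infDist w C = 0 := le_antisymm h0 Metric.infDist_nonneg
      have h3 : w ∈ closure C := (Metric.mem_closure_iff_infDist_zero hCne).2 this
      rwa [hclosed.closure_eq] at h3
    -- midpoint of p and w is x₀, in interior C
    have hx₀ : x₀ ∈ interior C := by
      have := hconv.combo_interior_self_mem_interior ht hwC
        (by norm_num : (0:ℝ) < 1/2) (by norm_num : (0:ℝ) ≤ 1/2) (by norm_num)
      have heq : (1/2 : ℝ) • p + (1/2 : ℝ) • w = x₀ := by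
        rw [hp, hw]; match_scalars <;> ring
      rwa [heq] at this
    have := h1 0 le_rfl
    simp at this
    exact this hx₀
end

section
/- Let X, Y be normed spaces, E ⊆ X a convex set with nonempty interior, and P : X → Y a continuous linear open map. Then P(int E) = int P(E). -/
/-! `f '' interior s` is open, convex and nonempty, and `f '' s` lies in its closure because
`s ⊆ closure (interior s)`; an open convex set with nonempty interior is the interior of its
closure. -/

open Set

theorem Convex.image_interior_eq_interior_image {𝕜 E F : Type*} [Field 𝕜] [LinearOrder 𝕜]
    [IsStrictOrderedRing 𝕜] [TopologicalSpace 𝕜] [OrderTopology 𝕜]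
    [AddCommGroup E] [Module 𝕜 E] [TopologicalSpace E] [IsTopologicalAddGroup E]
    [ContinuousSMul 𝕜 E] [AddCommGroup F] [Module 𝕜 F] [TopologicalSpace F]
    [IsTopologicalAddGroup F] [ContinuousSMul 𝕜 F]
    {s : Set E} (hs : Convex 𝕜 s) (hs' : (interior s).Nonempty)
    (f : E →L[𝕜] F) (hf : IsOpenMap f) :
    f '' interior s = interior (f '' s) := by
  set U := f '' interior s
  have hU_open : IsOpen U := hf _ isOpen_interior
  have hU_convex : Convex 𝕜 U := hs.interior.linear_image f.toLinearMap
  have hs_sub : f '' s ⊆ closure U :=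
    calc f '' s ⊆ f '' closure (interior s) :=
          image_mono (hs.closure_interior_eq_closure_of_nonempty_interior hs' ▸ subset_closure)
      _ ⊆ closure U := image_closure_subset_closure_image f.continuous
  refine subset_antisymm (interior_maximal (image_mono interior_subset) hU_open) ?_
  calc interior (f '' s) ⊆ interior (closure U) := interior_mono hs_sub
    _ = interior U :=
        hU_convex.interior_closure_eq_interior_of_nonempty_interior <| by
          rw [hU_open.interior_eq]; exact hs'.image f
    _ = U := hU_open.interior_eq

theorem stmt_3 {X Y : Type*} [NormedAddCommGroup X] [NormedSpace ℝ X]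
    [NormedAddCommGroup Y] [NormedSpace ℝ Y]
    (E : Set X) (hE : Convex ℝ E) (hint : (interior E).Nonempty)
    (P : X →L[ℝ] Y) (hP : IsOpenMap P) :
    P '' interior E = interior (P '' E) :=
  hE.image_interior_eq_interior_image hint P hP
end

section
/- Let X be a finite-dimensional normed space of dimension ≥ 2 and C ⊆ X an unbounded convex body with no asymptotic directions. If a nonzero continuous linear functional h is bounded below on C, then h attains its infimum over C. -/
open Filter Metric Set Topology

/-- If a ray from one point of a closed convex set stays in the set, then the ray
from every point of the set in the same direction stays in the set. -/
lemma aux_rec_of_ray {X : Type*} [NormedAddCommGroup X] [NormedSpace ℝ X]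
    {C : Set X} (hclosed : IsClosed C) (hconv : Convex ℝ C) {x u : X} (hx : x ∈ C)
    (hray : ∀ t : ℝ, 0 ≤ t → x + t • u ∈ C) :
    ∀ c ∈ C, ∀ t : ℝ, 0 ≤ t → c + t • u ∈ C := by
  intro c hc t ht
  have key : ∀ s : ℝ, max t 1 ≤ s → c + t • u + (t / s) • (x - c) ∈ C := by
    intro s hs
    have hs1 : (1:ℝ) ≤ s := (le_max_right t 1).trans hs
    have hs0 : (0:ℝ) < s := one_pos.trans_le hs1
    have hts : t ≤ s := (le_max_left t 1).trans hs
    have h01 : 0 ≤ t / s := div_nonneg ht hs0.le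
    have h11 : t / s ≤ 1 := (div_le_one hs0).2 hts
    have hmem := hconv hc (hray s hs0.le) (a := 1 - t / s) (b := t / s) (by linarith) h01 (by ring)
    have heq : (1 - t / s) • c + (t / s) • (x + s • u) = c + t • u + (t / s) • (x - c) := by
      have hts' : (t / s) * s = t := div_mul_cancel₀ t hs0.ne'
      rw [sub_smul, one_smul, smul_add, smul_smul, hts', smul_sub]
      abel
    rwa [heq] at hmem
  have h1 : Tendsto (fun s : ℝ => t / s) atTop (𝓝 (0:ℝ)) :=
    tendsto_const_nhds.div_atTop tendsto_id
  have h2 : Tendsto (fun s : ℝ => c + t • u + (t / s) • (x - c)) atTop (𝓝 (c + t • u)) := by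
    have hconst : Tendsto (fun _ : ℝ => c + t • u) atTop (𝓝 (c + t • u)) := tendsto_const_nhds
    have := hconst.add (h1.smul_const (x - c))
    simpa using this
  exact hclosed.mem_of_tendsto h2 ((eventually_ge_atTop (max t 1)).mono key)

/-- An unbounded closed convex set in a finite-dimensional space has a recession
direction at any of its points. -/
lemma aux_exists_rec_dir {X : Type*} [NormedAddCommGroup X] [NormedSpace ℝ X]
    [FiniteDimensional ℝ X] {K : Set X} (hcl : IsClosed K) (hcv : Convex ℝ K)
    {c₀ : X} (hc₀ : c₀ ∈ K) (hub : ¬ Bornology.IsBounded K) :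
    ∃ u : X, u ≠ 0 ∧ ∀ t : ℝ, 0 ≤ t → c₀ + t • u ∈ K := by
  have hx : ∀ n : ℕ, ∃ x ∈ K, ‖c₀‖ + n + 1 < ‖x‖ := by
    intro n
    by_contra hcon
    push_neg at hcon
    exact hub (isBounded_iff_forall_norm_le.2 ⟨‖c₀‖ + n + 1, hcon⟩)
  choose x hxK hxn using hx
  set d : ℕ → ℝ := fun n => ‖x n - c₀‖ with hd_def
  have hd : ∀ n : ℕ, (n:ℝ) + 1 ≤ d n := by
    intro n
    have h1 : ‖x n‖ - ‖c₀‖ ≤ ‖x n - c₀‖ := norm_sub_norm_le _ _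
    have := hxn n
    simp only [hd_def]
    linarith
  have hd0 : ∀ n, 0 < d n := fun n => lt_of_lt_of_le (by positivity) (hd n)
  set f : ℕ → X := fun n => (d n)⁻¹ • (x n - c₀) with hf_def
  have hf1 : ∀ n, f n ∈ Metric.sphere (0:X) 1 := by
    intro n
    have hdn : d n ≠ 0 := (hd0 n).ne'
    simp only [hf_def, mem_sphere_iff_norm, sub_zero, norm_smul, norm_inv,
      Real.norm_eq_abs, abs_of_pos (hd0 n)]
    exact inv_mul_cancel₀ hdn
  obtain ⟨u, hu_mem, φ, hφ, hconv_u⟩ := (isCompact_sphere (0:X) 1).tendsto_subseq hf1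
  have hu1 : ‖u‖ = 1 := by simpa [mem_sphere_iff_norm] using hu_mem
  have hu0 : u ≠ 0 := by
    intro h0
    rw [h0, norm_zero] at hu1
    norm_num at hu1
  refine ⟨u, hu0, fun t ht => ?_⟩
  have hmem : ∀ᶠ n in atTop, c₀ + t • f (φ n) ∈ K := by
    filter_upwards [eventually_ge_atTop ⌈t⌉₊] with n hn
    have htn : t ≤ d (φ n) := by
      have h1 : (n:ℝ) ≤ (φ n : ℝ) := by exact_mod_cast hφ.le_apply
      have h2 : t ≤ (⌈t⌉₊ : ℝ) := Nat.le_ceil t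
      have h3 : ((⌈t⌉₊ : ℕ) : ℝ) ≤ (n : ℝ) := by exact_mod_cast hn
      have := hd (φ n)
      linarith
    have hl0 : 0 ≤ t / d (φ n) := div_nonneg ht (hd0 _).le
    have hl1 : t / d (φ n) ≤ 1 := (div_le_one (hd0 _)).2 htn
    have hmem' := hcv hc₀ (hxK (φ n)) (a := 1 - t / d (φ n)) (b := t / d (φ n)) (by linarith) hl0 (by ring)
    have heq : (1 - t / d (φ n)) • c₀ + (t / d (φ n)) • (x (φ n))
        = c₀ + t • f (φ n) := by
      simp only [hf_def, smul_smul, sub_smul, one_smul]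
      rw [div_eq_mul_inv, smul_sub]
      abel
    rwa [heq] at hmem'
  have htend : Tendsto (fun n => c₀ + t • f (φ n)) atTop (𝓝 (c₀ + t • u)) :=
    tendsto_const_nhds.add (hconv_u.const_smul t)
  exact hcl.mem_of_tendsto htend hmem

theorem stmt_6 {X : Type*} [NormedAddCommGroup X] [NormedSpace ℝ X]
    [FiniteDimensional ℝ X] (hd : 2 ≤ Module.finrank ℝ X)
    (C : Set X) (hclosed : IsClosed C) (hconv : Convex ℝ C) (hne : C ≠ Set.univ)
    (hint : (interior C).Nonempty) (hunb : ¬ Bornology.IsBounded C)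
    (hnoasym : ∀ v : X, ¬ IsAsymptoticDir C v)
    (h : X →L[ℝ] ℝ) (hh : h ≠ 0) (hbdd : BddBelow (h '' C)) :
    ∃ x ∈ C, ∀ y ∈ C, h x ≤ h y := by
  obtain ⟨c₀, hc₀⟩ : C.Nonempty := Set.Nonempty.mono interior_subset hint
  set K : Set X := C ∩ {z | h z ≤ h c₀} with hK_def
  have hc₀K : c₀ ∈ K := ⟨hc₀, by simp⟩
  have hKclosed : IsClosed K :=
    hclosed.inter (isClosed_le h.continuous continuous_const)
  have hKconv : Convex ℝ K :=
    hconv.inter (convex_halfSpace_le (LinearMap.isLinear (h : X →ₗ[ℝ] ℝ)) (h c₀))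
  obtain ⟨b, hb⟩ := hbdd
  by_cases hKb : Bornology.IsBounded K
  · -- compact slice, minimize
    have hKcpt : IsCompact K := Metric.isCompact_of_isClosed_isBounded hKclosed hKb
    obtain ⟨z, hzK, hzmin⟩ := hKcpt.exists_isMinOn ⟨c₀, hc₀K⟩ (h.continuous.continuousOn)
    refine ⟨z, hzK.1, fun y hy => ?_⟩
    by_cases hy' : h y ≤ h c₀
    · exact hzmin ⟨hy, hy'⟩
    · exact le_trans (hzK.2) (le_of_not_ge hy')
  · exfalso
    obtain ⟨u, hu0, hray⟩ := aux_exists_rec_dir hKclosed hKconv hc₀K hKb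
    -- h u = 0
    have hule : h u ≤ 0 := by
      have h1 : h (c₀ + (1:ℝ) • u) ≤ h c₀ := (hray 1 zero_le_one).2
      rw [one_smul, map_add] at h1
      linarith
    have huge : 0 ≤ h u := by
      by_contra hneg
      push_neg at hneg
      set t : ℝ := (h c₀ - b + 1) / (-h u) with ht_def
      have hbc : b ≤ h c₀ := hb ⟨c₀, hc₀, rfl⟩
      have ht0 : 0 ≤ t := div_nonneg (by linarith) (by linarith)
      have hmem := (hray t ht0).1
      have hval : h (c₀ + t • u) = h c₀ + t * h u := by
        simp [map_add, map_smul, smul_eq_mul]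
      have htu : t * (-h u) = h c₀ - b + 1 :=
        div_mul_cancel₀ _ (by linarith : (0:ℝ) < -h u).ne'
      have := hb ⟨c₀ + t • u, hmem, rfl⟩
      rw [hval] at this
      nlinarith
    have hu_zero : h u = 0 := le_antisymm hule huge
    -- u is a recession direction of C
    have hrecC : ∀ c ∈ C, ∀ t : ℝ, 0 ≤ t → c + t • u ∈ C :=
      aux_rec_of_ray hclosed hconv hc₀ (fun t ht => (hray t ht).1)
    -- the cylinder S = C + ℝ u
    set S : Set X := {z | ∃ c ∈ C, ∃ r : ℝ, c + r • u = z} with hS_def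
    have hCS : C ⊆ S := fun c hc => ⟨c, hc, 0, by simp⟩
    have hTrans : ∀ (z : X) (s : ℝ), z ∈ S → z + s • u ∈ S := by
      rintro z s ⟨c, hc, r, rfl⟩
      exact ⟨c, hc, r + s, by rw [add_smul]; abel⟩
    have hSinv : ∀ s : ℝ, (fun z : X => z + s • u) ⁻¹' S = S := by
      intro s
      ext z
      constructor
      · intro hz
        have := hTrans _ (-s) hz
        simpa [neg_smul] using this
      · intro hz
        exact hTrans z s hz
    -- frontier of S is empty, else asymptotic direction
    have hSfr : frontier S = ∅ := by
      by_contra hfr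
      obtain ⟨y₀, hy₀⟩ := Set.nonempty_iff_ne_empty.2 hfr
      apply hnoasym u
      refine ⟨hu0, y₀, fun t ht hmem => ?_, ?_⟩
      · -- y₀ + t • u ∈ interior C leads to y₀ ∈ interior S, contradiction
        have h1 : y₀ + t • u ∈ interior S := interior_mono hCS hmem
        have h2 : y₀ ∈ (fun z : X => z + t • u) ⁻¹' (interior S) := h1
        have h3 : (fun z : X => z + t • u) ⁻¹' (interior S)
            = interior ((fun z : X => z + t • u) ⁻¹' S) :=
          (Homeomorph.addRight (t • u)).preimage_interior S
        rw [h3, hSinv t] at h2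
        exact hy₀.2 h2
      · -- distance tends to 0
        rw [Metric.tendsto_nhds]
        intro ε hε
        have hy₀cl : y₀ ∈ closure S := hy₀.1
        obtain ⟨z, hzS, hz⟩ := Metric.mem_closure_iff.1 hy₀cl (ε/2) (by positivity)
        obtain ⟨c, hc, r, rfl⟩ := hzS
        filter_upwards [eventually_ge_atTop (-r)] with t' ht'
        have hmem' : c + (t' + r) • u ∈ C := hrecC c hc (t' + r) (by linarith)
        have hle : infDist (y₀ + t' • u) C ≤ dist (y₀ + t' • u) (c + (t' + r) • u) :=
          Metric.infDist_le_dist_of_mem hmem'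
        have heq : dist (y₀ + t' • u) (c + (t' + r) • u) = dist y₀ (c + r • u) := by
          rw [dist_eq_norm, dist_eq_norm, add_smul]
          congr 1
          abel
        have h0 : (0:ℝ) ≤ infDist (y₀ + t' • u) C := Metric.infDist_nonneg
        rw [Real.dist_0_eq_abs, abs_of_nonneg h0]
        calc infDist (y₀ + t' • u) C ≤ dist y₀ (c + r • u) := heq ▸ hle
          _ < ε / 2 := hz
          _ < ε := by linarith
    -- hence S is clopen, so S = univ
    have hScl : IsClopen S := isClopen_iff_frontier_eq_empty.2 hSfr
    have : PreconnectedSpace X := ⟨(convex_univ : Convex ℝ (Set.univ : Set X)).isPreconnected⟩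
    have hSuniv : S = Set.univ := hScl.eq_univ ⟨c₀, hCS hc₀⟩
    -- but then h is bounded below on all of X, contradicting h ≠ 0
    obtain ⟨w, hw⟩ : ∃ w : X, h w ≠ 0 := by
      by_contra hcon
      push_neg at hcon
      exact hh (ContinuousLinearMap.ext fun z => by simp [hcon z])
    set p : X := ((b - 1) / h w) • w with hp_def
    have hp : h p = b - 1 := by
      simp only [hp_def, map_smul, smul_eq_mul]
      field_simp
    have hpS : p ∈ S := hSuniv ▸ Set.mem_univ p
    obtain ⟨c, hc, r, hcr⟩ := hpS
    have : h p = h c := by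
      rw [← hcr]
      simp [map_add, map_smul, hu_zero, smul_eq_mul]
    have hbc : b ≤ h c := hb ⟨c, hc, rfl⟩
    rw [hp] at this
    linarith
end

section
/- Let X be a finite-dimensional normed space of dimension ≥ 2, C ⊆ X an unbounded convex body with no asymptotic directions, and h a nonzero continuous linear functional bounded below on C. Then for every α ∈ ℝ the sublevel set {x ∈ C : h(x) ≤ α} is bounded. -/
/-!
Suppose some sublevel set `S = {x ∈ C | h x ≤ α}` is unbounded. Being closed and convex in finite
dimension, `S` contains a ray `x + ℝ₊ v`; since `h` is bounded on `S`, `h v = 0`, and since `C` is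
closed and convex, `v` is a recession direction of `C`. The set `E = C - ℝ₊ v` then lies in the
half-space `{h ≥ inf h(C)}`, so it is a nonempty proper subset of the connected space `X` and has a
frontier point `q`. The ray `q + ℝ₊ v` misses `int C ⊆ int E` because `E` is stable under
`- ℝ₊ v`, and approaches `C` because points of `E` are carried into `C` by `+ ℝ₊ v`; so `v` is an
asymptotic direction of `C`.
-/

open Filter Metric Set Topology

section TopologicalVectorSpace

variable {E : Type*} [AddCommGroup E] [TopologicalSpace E]

theorem add_notMem_interior_of_sub_mem [ContinuousAdd E] {D : Set E} {w q : E}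
    (hD : ∀ z ∈ D, z - w ∈ D) (hq : q ∉ interior D) : q + w ∉ interior D := by
  intro hqw
  refine hq (interior_maximal ?_ (isOpen_interior.preimage (continuous_add_const w)) hqw)
  intro z hz
  simpa using hD _ (interior_subset hz)

variable [Module ℝ E] [IsTopologicalAddGroup E] [ContinuousSMul ℝ E]

/-- `c + t v` is the limit of points on the segments from `c` to `x + s v` as `s → ∞`. -/
theorem IsClosed.add_smul_mem_of_ray_subset {C : Set E} (hC : IsClosed C) (hconv : Convex ℝ C)
    {x v : E} (hray : ∀ s : ℝ, 0 ≤ s → x + s • v ∈ C) {c : E} (hc : c ∈ C) {t : ℝ}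
    (ht : 0 ≤ t) : c + t • v ∈ C := by
  have hdiv : Tendsto (fun s : ℝ => t / s) atTop (𝓝 0) :=
    tendsto_const_nhds.div_atTop tendsto_id
  have hlim : Tendsto (fun s : ℝ => c + t • v + (t / s) • (x - c)) atTop (𝓝 (c + t • v)) := by
    simpa using tendsto_const_nhds.add (hdiv.smul_const (x - c))
  refine hC.mem_of_tendsto hlim ?_
  filter_upwards [eventually_ge_atTop t, eventually_gt_atTop 0] with s hts hs
  have hseg : c + t • v + (t / s) • (x - c) = c + (t / s) • (x + s • v - c) := by
    simp only [smul_sub, smul_add, smul_smul, div_mul_cancel₀ _ hs.ne']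
    abel
  rw [hseg]
  exact hconv.add_smul_sub_mem hc (hray s hs.le) ⟨by positivity, div_le_one_of_le₀ hts hs.le⟩

end TopologicalVectorSpace

theorem LinearMap.map_eq_zero_of_ray_subset {E : Type*} [AddCommGroup E] [Module ℝ E]
    {f : E →ₗ[ℝ] ℝ} {S : Set E} (hS : Bornology.IsBounded (f '' S)) {x v : E}
    (hray : ∀ t : ℝ, 0 ≤ t → x + t • v ∈ S) : f v = 0 := by
  by_contra hv
  obtain ⟨R, hR⟩ := isBounded_iff_forall_norm_le.1 hS
  have hR0 : 0 ≤ R := (norm_nonneg _).trans (hR _ ⟨_, hray 0 le_rfl, rfl⟩)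
  obtain ⟨t, ht0, ht⟩ : ∃ t : ℝ, 0 ≤ t ∧ t * |f v| = R + |f x| + 1 :=
    ⟨_, div_nonneg (by positivity) (abs_nonneg _), div_mul_cancel₀ _ (abs_ne_zero.2 hv)⟩
  have hbound := hR _ ⟨_, hray t ht0, rfl⟩
  rw [Real.norm_eq_abs, map_add, map_smul, smul_eq_mul] at hbound
  have htri : |t * f v| ≤ |f x + t * f v| + |f x| := by
    simpa using abs_sub (f x + t * f v) (f x)
  rw [abs_mul, abs_of_nonneg ht0, ht] at htri
  linarith

section NormedSpace

variable {X : Type*} [NormedAddCommGroup X] [NormedSpace ℝ X]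

theorem Convex.add_smul_inv_norm_smul_sub_mem {S : Set X} (hS : Convex ℝ S) {x y : X}
    (hx : x ∈ S) (hy : y ∈ S) {t : ℝ} (ht₀ : 0 ≤ t) (ht : t ≤ ‖y - x‖) :
    x + t • ‖y - x‖⁻¹ • (y - x) ∈ S := by
  rw [smul_smul]
  exact hS.add_smul_sub_mem hx hy ⟨by positivity, mul_inv_le_one_of_le₀ ht (norm_nonneg _)⟩

/-- The ray is found as a limit of the normalized directions from a fixed point `x ∈ S` to points
of `S` escaping to infinity; compactness of the unit sphere provides the limit direction. -/
theorem IsClosed.exists_ray_subset_of_not_isBounded [FiniteDimensional ℝ X] {S : Set X}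
    (hS : IsClosed S) (hconv : Convex ℝ S) (hunb : ¬ Bornology.IsBounded S) :
    ∃ x : X, ∃ v : X, v ≠ 0 ∧ ∀ t : ℝ, 0 ≤ t → x + t • v ∈ S := by
  obtain ⟨x, hx⟩ : S.Nonempty :=
    nonempty_iff_ne_empty.2 (by rintro rfl; exact hunb Bornology.isBounded_empty)
  have hfar : ∀ n : ℕ, ∃ y ∈ S, (n : ℝ) < ‖y - x‖ := by
    intro n
    by_contra! hnear
    exact hunb ((isBounded_iff_subset_closedBall x).2
      ⟨n, fun y hy => mem_closedBall_iff_norm.2 (hnear y hy)⟩)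
  choose y hyS hy using hfar
  have hyx : ∀ n, y n - x ≠ 0 := fun n => norm_pos_iff.1 ((Nat.cast_nonneg n).trans_lt (hy n))
  obtain ⟨v, hv, φ, hφ, hlim⟩ := (isCompact_sphere (0 : X) 1).tendsto_subseq
    (x := fun n => ‖y n - x‖⁻¹ • (y n - x)) fun n => by
      rw [mem_sphere_zero_iff_norm, norm_smul, norm_inv, norm_norm,
        inv_mul_cancel₀ (norm_ne_zero_iff.2 (hyx n))]
  refine ⟨x, v, ne_zero_of_mem_unit_sphere ⟨v, hv⟩, fun t ht => ?_⟩
  refine hS.mem_of_tendsto (tendsto_const_nhds.add (hlim.const_smul t)) ?_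
  filter_upwards [eventually_ge_atTop ⌈t⌉₊] with k hk
  refine hconv.add_smul_inv_norm_smul_sub_mem hx (hyS _) ht (le_of_lt ?_)
  calc t ≤ ⌈t⌉₊ := Nat.le_ceil t
    _ ≤ k := Nat.cast_le.2 hk
    _ ≤ φ k := Nat.cast_le.2 hφ.le_apply
    _ < ‖y (φ k) - x‖ := hy _

theorem tendsto_infDist_add_smul_of_mem_closure {C E : Set X} {v q : X}
    (hE : ∀ z ∈ E, ∀ᶠ t : ℝ in atTop, z + t • v ∈ C) (hq : q ∈ closure E) :
    Tendsto (fun t : ℝ => infDist (q + t • v) C) atTop (𝓝 0) := by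
  rw [Metric.tendsto_nhds]
  intro ε hε
  obtain ⟨z, hzE, hqz⟩ := Metric.mem_closure_iff.1 hq ε hε
  filter_upwards [hE z hzE] with t hzt
  rw [Real.dist_0_eq_abs, abs_of_nonneg infDist_nonneg]
  calc infDist (q + t • v) C ≤ dist (q + t • v) (z + t • v) := infDist_le_dist_of_mem hzt
    _ = dist q z := dist_add_right _ _ _
    _ < ε := hqz

theorem isAsymptoticDir_of_forall_add_smul_mem {C : Set X} {v : X} (hv : v ≠ 0)
    (hC : C.Nonempty) (hrec : ∀ c ∈ C, ∀ t : ℝ, 0 ≤ t → c + t • v ∈ C) {f : X →L[ℝ] ℝ}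
    (hf : f ≠ 0) (hfv : f v = 0) (hfC : BddBelow (f '' C)) : IsAsymptoticDir C v := by
  set E : Set X := {z | ∃ c ∈ C, ∃ s : ℝ, 0 ≤ s ∧ z = c - s • v}
  have hCE : C ⊆ E := fun c hc => ⟨c, hc, 0, le_rfl, by simp⟩
  have hE_sub : ∀ s : ℝ, 0 ≤ s → ∀ z ∈ E, z - s • v ∈ E := by
    rintro s hs _ ⟨c, hc, s', hs', rfl⟩
    exact ⟨c, hc, s' + s, by positivity, by rw [add_smul]; abel⟩
  have hE_ne_univ : E ≠ univ := by
    obtain ⟨β, hβ⟩ := hfC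
    obtain ⟨w, hw⟩ := LinearMap.surjective (f := (f : X →ₗ[ℝ] ℝ))
      (fun h0 => hf (ContinuousLinearMap.coe_injective h0)) (β - 1)
    intro hE
    obtain ⟨c, hc, s, -, rfl⟩ : w ∈ E := hE ▸ mem_univ w
    have hβc := hβ ⟨c, hc, rfl⟩
    simp only [ContinuousLinearMap.coe_coe, map_sub, map_smul, hfv, smul_zero, sub_zero] at hw
    linarith
  obtain ⟨q, hq_closure, hq_interior⟩ := nonempty_frontier_iff.2 ⟨hC.mono hCE, hE_ne_univ⟩
  refine ⟨hv, q, fun t ht hqt => ?_, tendsto_infDist_add_smul_of_mem_closure ?_ hq_closure⟩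
  · exact add_notMem_interior_of_sub_mem (hE_sub t ht) hq_interior (interior_mono hCE hqt)
  · rintro _ ⟨c, hc, s, -, rfl⟩
    filter_upwards [eventually_ge_atTop s] with t hst
    convert hrec c hc (t - s) (by linarith) using 1
    module

end NormedSpace

theorem stmt_7_general {X : Type*} [NormedAddCommGroup X] [NormedSpace ℝ X]
    [FiniteDimensional ℝ X]
    (C : Set X) (hclosed : IsClosed C) (hconv : Convex ℝ C)
    (hnoasym : ∀ v : X, ¬ IsAsymptoticDir C v)
    (h : X →L[ℝ] ℝ) (hh : h ≠ 0) (hbdd : BddBelow (h '' C)) :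
    ∀ α : ℝ, Bornology.IsBounded {x ∈ C | h x ≤ α} := by
  intro α
  by_contra hunb
  obtain ⟨x, v, hv, hray⟩ := (hclosed.inter (isClosed_le h.continuous continuous_const))
    |>.exists_ray_subset_of_not_isBounded
      (hconv.inter (convex_halfSpace_le (h : X →ₗ[ℝ] ℝ).isLinear α)) hunb
  obtain ⟨β, hβ⟩ := hbdd
  have hhv : h v = 0 := by
    refine LinearMap.map_eq_zero_of_ray_subset (f := (h : X →ₗ[ℝ] ℝ))
      ((isBounded_Icc β α).subset ?_) hray
    rintro _ ⟨y, ⟨hyC, hyα⟩, rfl⟩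
    exact ⟨hβ ⟨y, hyC, rfl⟩, hyα⟩
  have hrec : ∀ c ∈ C, ∀ t : ℝ, 0 ≤ t → c + t • v ∈ C := fun c hc t ht =>
    hclosed.add_smul_mem_of_ray_subset hconv (fun s hs => (hray s hs).1) hc ht
  exact hnoasym v (isAsymptoticDir_of_forall_add_smul_mem hv ⟨_, (hray 0 le_rfl).1⟩ hrec hh hhv
    ⟨β, hβ⟩)

theorem stmt_7 {X : Type*} [NormedAddCommGroup X] [NormedSpace ℝ X]
    [FiniteDimensional ℝ X] (hd : 2 ≤ Module.finrank ℝ X)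
    (C : Set X) (hclosed : IsClosed C) (hconv : Convex ℝ C) (hne : C ≠ Set.univ)
    (hint : (interior C).Nonempty) (hunb : ¬ Bornology.IsBounded C)
    (hnoasym : ∀ v : X, ¬ IsAsymptoticDir C v)
    (h : X →L[ℝ] ℝ) (hh : h ≠ 0) (hbdd : BddBelow (h '' C)) :
    ∀ α : ℝ, Bornology.IsBounded {x ∈ C | h x ≤ α} :=
  stmt_7_general C hclosed hconv hnoasym h hh hbdd
end

section
/- Let X be a finite-dimensional normed space of dimension ≥ 2 and C ⊆ X an unbounded convex body with no asymptotic directions. Then for each z ∈ X \ C, the cone c(z,C) = z + ℝ₊·(C − z) is closed. -/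
/-- The cone with vertex `z` generated by `E`: `z + ℝ₊ · (E - z)`. -/
def vertexCone {X : Type*} [NormedAddCommGroup X] [NormedSpace ℝ X]
    (z : X) (E : Set X) : Set X :=
  {x : X | ∃ t : ℝ, 0 ≤ t ∧ ∃ c ∈ E, x = z + t • (c - z)}

open Filter Metric Set

/-- If `C` has no asymptotic directions and `v` is a nonzero recession direction of the
closed nonempty set `C`, then every ray in direction `v` eventually meets `C`. -/
lemma aux_ray_meets {X : Type*} [NormedAddCommGroup X] [NormedSpace ℝ X]
    (C : Set X) (hC : C.Nonempty) (hnoasym : ∀ v : X, ¬ IsAsymptoticDir C v)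
    (v : X) (hv : v ≠ 0)
    (hrec : ∀ c ∈ C, ∀ s : ℝ, 0 ≤ s → c + s • v ∈ C) (z : X) :
    ∃ s : ℝ, 0 ≤ s ∧ z + s • v ∈ C := by
  by_contra h
  push_neg at h
  set D : Set X := {q : X | ∃ t : ℝ, 0 ≤ t ∧ q + t • v ∈ C} with hD
  have hCD : C ⊆ D := fun c hc => ⟨0, le_refl 0, by simpa using hc⟩
  have claimA : ∀ x₀ ∈ closure D,
      Tendsto (fun t : ℝ => infDist (x₀ + t • v) C) atTop (nhds 0) := by
    intro x₀ hx₀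
    rw [Metric.tendsto_nhds]
    intro ε hε
    obtain ⟨q, hqD, hq⟩ := Metric.mem_closure_iff.mp hx₀ ε hε
    obtain ⟨t₀, ht₀, hqC⟩ := hqD
    filter_upwards [eventually_ge_atTop t₀] with t ht
    have hmem : q + t • v ∈ C := by
      have h2 := hrec _ hqC (t - t₀) (by linarith)
      have h3 : q + t₀ • v + (t - t₀) • v = q + t • v := by
        rw [add_assoc, ← add_smul]; ring_nf
      rwa [h3] at h2
    have h1 : infDist (x₀ + t • v) C ≤ dist (x₀ + t • v) (q + t • v) :=
      infDist_le_dist_of_mem hmem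
    have h2 : dist (x₀ + t • v) (q + t • v) = dist x₀ q := dist_add_right _ _ _
    have h4 : (0:ℝ) ≤ infDist (x₀ + t • v) C := infDist_nonneg
    rw [Real.dist_0_eq_abs, abs_of_nonneg h4]
    calc infDist (x₀ + t • v) C ≤ dist x₀ q := by rw [← h2]; exact h1
      _ < ε := hq
  have hmain : ∃ x₀ ∈ closure D, ∀ t : ℝ, 0 ≤ t → x₀ + t • v ∉ interior C := by
    by_cases hzE : z ∈ closure D
    · exact ⟨z, hzE, fun t ht hi => h t ht (interior_subset hi)⟩
    · haveI : PreconnectedSpace X :=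
        ⟨(convex_univ : Convex ℝ (Set.univ : Set X)).isPreconnected⟩
      have hfr : (frontier (closure D)).Nonempty := by
        by_contra hemp
        rw [not_nonempty_iff_eq_empty] at hemp
        have hclop : IsClopen (closure D) := isClopen_iff_frontier_eq_empty.mpr hemp
        rcases isClopen_iff.mp hclop with h1 | h1
        · obtain ⟨c, hc⟩ := hC
          exact absurd (h1 ▸ subset_closure (hCD hc)) (notMem_empty c)
        · exact hzE (h1 ▸ mem_univ z)
      obtain ⟨x₀, hx₀⟩ := hfr
      have hx₀cl : x₀ ∈ closure D := by
        have := hx₀.1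
        rwa [closure_closure] at this
      refine ⟨x₀, hx₀cl, fun t ht hi => ?_⟩
      have hU : ((fun y : X => y + t • v) ⁻¹' interior C) ⊆ closure D :=
        fun q hq => subset_closure ⟨t, ht, interior_subset hq⟩
      have hUopen : IsOpen ((fun y : X => y + t • v) ⁻¹' interior C) :=
        isOpen_interior.preimage (continuous_id.add continuous_const)
      have : x₀ ∈ interior (closure D) :=
        interior_maximal hU hUopen hi
      exact hx₀.2 this
  obtain ⟨x₀, hx₀, hnoint⟩ := hmain
  exact hnoasym v ⟨hv, x₀, hnoint, claimA x₀ hx₀⟩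

/-- If a sequence in a closed convex set escapes to infinity with normalized directions
converging to `v`, then `v` is a recession direction of `C`. -/
lemma aux_recession_of_escape {X : Type*} [NormedAddCommGroup X] [NormedSpace ℝ X]
    (C : Set X) (hclosed : IsClosed C) (hconv : Convex ℝ C) (z v : X)
    (cs : ℕ → X) (hcs : ∀ n, cs n ∈ C)
    (hnorm : Tendsto (fun n => ‖cs n - z‖) atTop atTop)
    (hdir : Tendsto (fun n => ‖cs n - z‖⁻¹ • (cs n - z)) atTop (nhds v)) :
    ∀ c ∈ C, ∀ s : ℝ, 0 ≤ s → c + s • v ∈ C := by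
  intro c hc s hs
  set w : ℕ → X := fun n => c + (s * ‖cs n - z‖⁻¹) • (cs n - c) with hw
  have hinv : Tendsto (fun n => ‖cs n - z‖⁻¹) atTop (nhds 0) :=
    hnorm.inv_tendsto_atTop
  have hmem : ∀ᶠ n in atTop, w n ∈ C := by
    filter_upwards [hnorm.eventually_ge_atTop (max s 1)] with n hn
    have hpos : (0:ℝ) < ‖cs n - z‖ :=
      lt_of_lt_of_le (by positivity) ((le_max_right s 1).trans hn)
    set l : ℝ := s * ‖cs n - z‖⁻¹ with hl
    have hl0 : 0 ≤ l := by positivity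
    have hl1 : l ≤ 1 := by
      rw [hl]
      have := (le_max_left s 1).trans hn
      rw [mul_inv_le_iff₀ hpos, one_mul]
      exact this
    have : (1 - l) • c + l • cs n ∈ C := hconv hc (hcs n) (by linarith) hl0 (by ring)
    have heq : (1 - l) • c + l • cs n = w n := by
      rw [hw]; simp only [sub_smul, one_smul, smul_sub]; abel
    rwa [heq] at this
  have hlim : Tendsto w atTop (nhds (c + s • v)) := by
    have h1 : Tendsto (fun n => ‖cs n - z‖⁻¹ • (cs n - c)) atTop (nhds v) := by
      have heq : ∀ n, ‖cs n - z‖⁻¹ • (cs n - c)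
          = ‖cs n - z‖⁻¹ • (cs n - z) + ‖cs n - z‖⁻¹ • (z - c) := by
        intro n; rw [← smul_add]; congr 1; abel
      simp only [heq]
      have h2 : Tendsto (fun n => ‖cs n - z‖⁻¹ • (z - c)) atTop (nhds ((0:ℝ) • (z - c))) :=
        hinv.smul_const (z - c)
      simpa using hdir.add h2
    have h3 : Tendsto (fun n => (s * ‖cs n - z‖⁻¹) • (cs n - c)) atTop (nhds (s • v)) := by
      have := h1.const_smul s
      simpa [smul_smul] using this
    simpa using h3.const_add c
  exact hclosed.mem_of_tendsto hlim hmem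

theorem stmt_8 {X : Type*} [NormedAddCommGroup X] [NormedSpace ℝ X]
    [FiniteDimensional ℝ X] (hd : 2 ≤ Module.finrank ℝ X)
    (C : Set X) (hclosed : IsClosed C) (hconv : Convex ℝ C) (hne : C ≠ Set.univ)
    (hint : (interior C).Nonempty) (hunb : ¬ Bornology.IsBounded C)
    (hnoasym : ∀ v : X, ¬ IsAsymptoticDir C v)
    (z : X) (hz : z ∉ C) :
    IsClosed (vertexCone z C) := by
  obtain ⟨c₀, hc₀i⟩ := hint
  have hc₀C : c₀ ∈ C := interior_subset hc₀i
  apply IsSeqClosed.isClosed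
  intro x p hxmem hxp
  by_cases hpz : p = z
  · exact ⟨0, le_refl 0, c₀, hc₀C, by simp [hpz]⟩
  choose t ht c hcC hx using hxmem
  have hr : 0 < infDist z C := (hclosed.notMem_iff_infDist_pos ⟨c₀, hc₀C⟩).mp hz
  set r := infDist z C with hrdef
  have hrc : ∀ n, r ≤ ‖c n - z‖ := by
    intro n
    have := infDist_le_dist_of_mem (x := z) (hcC n)
    rwa [dist_eq_norm, norm_sub_rev] at this
  have hxz : ∀ n, ‖x n - z‖ = t n * ‖c n - z‖ := by
    intro n
    rw [hx n, add_sub_cancel_left, norm_smul, Real.norm_eq_abs, abs_of_nonneg (ht n)]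
  have hnb : Tendsto (fun n => ‖x n - z‖) atTop (nhds ‖p - z‖) :=
    ((hxp.sub tendsto_const_nhds).norm)
  obtain ⟨M, hM⟩ : ∃ M, ∀ n, ‖x n - z‖ ≤ M := by
    obtain ⟨M, hM⟩ := hnb.bddAbove_range
    exact ⟨M, fun n => hM (Set.mem_range_self n)⟩
  have htM : ∀ n, t n ∈ Set.Icc 0 (M / r) := by
    intro n
    refine ⟨ht n, ?_⟩
    rw [le_div_iff₀ hr]
    calc t n * r ≤ t n * ‖c n - z‖ := mul_le_mul_of_nonneg_left (hrc n) (ht n)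
      _ = ‖x n - z‖ := (hxz n).symm
      _ ≤ M := hM n
  obtain ⟨t₀, ht₀mem, φ, hφ, hφt⟩ :=
    (isCompact_Icc (a := (0:ℝ)) (b := M / r)).tendsto_subseq htM
  by_cases ht₀ : 0 < t₀
  · have hev : ∀ᶠ n in atTop, 0 < t (φ n) := hφt.eventually (eventually_gt_nhds ht₀)
    have hclim : Tendsto (fun n => z + (t (φ n))⁻¹ • (x (φ n) - z)) atTop
        (nhds (z + t₀⁻¹ • (p - z))) := by
      apply Tendsto.const_add
      exact (hφt.inv₀ ht₀.ne').smul ((hxp.comp hφ.tendsto_atTop).sub tendsto_const_nhds)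
    have hcl : Tendsto (fun n => c (φ n)) atTop (nhds (z + t₀⁻¹ • (p - z))) := by
      apply hclim.congr'
      filter_upwards [hev] with n hn
      rw [hx (φ n), add_sub_cancel_left, smul_smul, inv_mul_cancel₀ hn.ne', one_smul]
      abel
    have hLC : z + t₀⁻¹ • (p - z) ∈ C :=
      hclosed.mem_of_tendsto hcl (Filter.Eventually.of_forall fun n => hcC (φ n))
    refine ⟨t₀, ht₀.le, _, hLC, ?_⟩
    rw [add_sub_cancel_left, smul_smul, mul_inv_cancel₀ ht₀.ne', one_smul, add_sub_cancel]
  · have ht₀0 : t₀ = 0 := le_antisymm (not_lt.mp ht₀) ht₀mem.1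
    have hpz' : (0:ℝ) < ‖p - z‖ := norm_pos_iff.mpr (sub_ne_zero.mpr hpz)
    have hprod : Tendsto (fun n => t (φ n) * ‖c (φ n) - z‖) atTop (nhds ‖p - z‖) := by
      have h1 := hnb.comp hφ.tendsto_atTop
      have h2 : (fun n => ‖x (φ n) - z‖) = fun n => t (φ n) * ‖c (φ n) - z‖ :=
        funext fun n => hxz (φ n)
      rwa [← h2]
    have hevpos : ∀ᶠ n in atTop, 0 < t (φ n) := by
      filter_upwards [hprod.eventually (eventually_gt_nhds (half_lt_self hpz'))] with n hn
      rcases (ht (φ n)).lt_or_eq with h' | h'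
      · exact h'
      · exfalso; rw [← h', zero_mul] at hn; linarith
    have hcinf : Tendsto (fun n => ‖c (φ n) - z‖) atTop atTop := by
      have hts : Tendsto (fun n => t (φ n)) atTop (nhdsWithin 0 (Set.Ioi 0)) := by
        apply tendsto_nhdsWithin_of_tendsto_nhds_of_eventually_within
        · rw [← ht₀0]; exact hφt
        · exact hevpos
      have hinv : Tendsto (fun n => (t (φ n))⁻¹) atTop atTop :=
        tendsto_inv_nhdsGT_zero.comp hts
      apply (hprod.pos_mul_atTop hpz' hinv).congr'
      filter_upwards [hevpos] with n hn
      field_simp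
    set u : ℕ → X := fun n => ‖c (φ n) - z‖⁻¹ • (c (φ n) - z) with hu_def
    have hcnz : ∀ n, ‖c (φ n) - z‖ ≠ 0 := fun n => (hr.trans_le (hrc (φ n))).ne'
    have hu : ∀ n, u n ∈ Metric.sphere (0:X) 1 := by
      intro n
      rw [mem_sphere, dist_zero_right, hu_def, norm_smul, Real.norm_eq_abs, abs_inv,
        abs_of_nonneg (norm_nonneg _), inv_mul_cancel₀ (hcnz n)]
    obtain ⟨v, hvmem, ψ, hψ, hψu⟩ := (isCompact_sphere (0:X) 1).tendsto_subseq hu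
    have hv : v ≠ 0 := by
      rw [mem_sphere, dist_zero_right] at hvmem
      intro h; rw [h, norm_zero] at hvmem; norm_num at hvmem
    have hrec : ∀ cc ∈ C, ∀ s : ℝ, 0 ≤ s → cc + s • v ∈ C := by
      apply aux_recession_of_escape C hclosed hconv z v (fun n => c (φ (ψ n)))
        (fun n => hcC _) (hcinf.comp hψ.tendsto_atTop) hψu
    obtain ⟨s, hs, hsC⟩ := aux_ray_meets C ⟨c₀, hc₀C⟩ hnoasym v hv hrec z
    have hs0 : 0 < s := by
      rcases hs.lt_or_eq with h' | h'
      · exact h'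
      · exfalso; apply hz; rw [← h', zero_smul, add_zero] at hsC; exact hsC
    have hkey : p - z = ‖p - z‖ • v := by
      have h1 : Tendsto (fun n => x (φ (ψ n)) - z) atTop (nhds (p - z)) :=
        ((hxp.comp hφ.tendsto_atTop).comp hψ.tendsto_atTop).sub tendsto_const_nhds
      have h2 : Tendsto (fun n => (t (φ (ψ n)) * ‖c (φ (ψ n)) - z‖) • u (ψ n)) atTop
          (nhds (‖p - z‖ • v)) := (hprod.comp hψ.tendsto_atTop).smul hψu
      have heq : ∀ n, x (φ (ψ n)) - z = (t (φ (ψ n)) * ‖c (φ (ψ n)) - z‖) • u (ψ n) := by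
        intro n
        rw [hx (φ (ψ n)), add_sub_cancel_left, hu_def, smul_smul, mul_assoc,
          mul_inv_cancel₀ (hcnz (ψ n)), mul_one]
      exact tendsto_nhds_unique h1 (h2.congr fun n => (heq n).symm)
    refine ⟨‖p - z‖ / s, by positivity, _, hsC, ?_⟩
    rw [add_sub_cancel_left, smul_smul, div_mul_cancel₀ _ hs0.ne', ← hkey, add_sub_cancel]
end

section
/- Let X be a finite-dimensional normed space of dimension ≥ 2 and C ⊆ X an unbounded convex body with no asymptotic directions. Then for each z ∈ X \ C, the set Γ_C(z) = C ∩ ∂[c(z,C)] is nonempty and bounded. -/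
/-!
Write `K = c(z, C)`. Two facts drive the proof. If points `c n ∈ C` escape to infinity with
directions `normalize (c n - z) → e`, then `e` is a recession direction of `C`; as `C` has no
asymptotic directions, the ray `z + ℝ₊ e` then enters `int C`, so `z + e ∈ int K`. And `K`, hence
also `int K` and `∂K`, is invariant under the homotheties centred at `z`.

Boundedness: points of `C ∩ ∂K` escaping to infinity would have a limit direction `e` with `z + e`
both in `∂K` (by homothety invariance) and in `int K`. Nonemptiness: as `dim X ≥ 2`, `X \ {z}` is
connected, so `∂K` has a point `w ≠ z`, a limit of points `z + t n • (c n - z)` with `c n ∈ C`.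
The `c n` cannot escape to infinity, since their directions tend to that of `w`; so a subsequence
converges to some `p ∈ C` on the ray from `z` through `w`, which lies in `∂K`.
-/

open Filter Metric Set Topology NormedSpace

theorem IsPreconnected.inter_frontier_nonempty {α : Type*} [TopologicalSpace α] {s t : Set α}
    (hs : IsPreconnected s) (hst : (s ∩ t).Nonempty) (hs't : (s \ t).Nonempty) :
    (s ∩ frontier t).Nonempty := by
  have := isPreconnected_iff_preconnectedSpace.mp hs
  obtain ⟨x, hxs, hxt⟩ := hst
  obtain ⟨y, hys, hyt⟩ := hs't
  obtain ⟨p, hp⟩ : (frontier (((↑) : s → α) ⁻¹' t)).Nonempty :=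
    nonempty_frontier_iff.mpr ⟨⟨⟨x, hxs⟩, hxt⟩, (ne_univ_iff_exists_notMem _).2 ⟨⟨y, hys⟩, hyt⟩⟩
  exact ⟨p, p.2, continuous_subtype_val.frontier_preimage_subset t hp⟩

theorem NormedSpace.continuousAt_normalize {V : Type*} [NormedAddCommGroup V] [NormedSpace ℝ V]
    {x : V} (hx : x ≠ 0) : ContinuousAt normalize x :=
  (continuousAt_id.norm.inv₀ (norm_ne_zero_iff.2 hx)).smul continuousAt_id

section Recession

variable {X : Type*} [NormedAddCommGroup X] [NormedSpace ℝ X]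

def IsRecessionDir (C : Set X) (v : X) : Prop :=
  ∀ p ∈ C, ∀ t : ℝ, 0 ≤ t → p + t • v ∈ C

theorem isRecessionDir_of_tendsto {C : Set X} (hclosed : IsClosed C) (hconv : Convex ℝ C)
    {c : ℕ → X} (hc : ∀ n, c n ∈ C) {r : ℕ → ℝ} (hr : Tendsto r atTop atTop) {z v : X}
    (hv : Tendsto (fun n => (r n)⁻¹ • (c n - z)) atTop (𝓝 v)) : IsRecessionDir C v := by
  intro p hp t ht
  have hmem : ∀ᶠ n in atTop, p + (t * (r n)⁻¹) • (c n - p) ∈ C := by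
    filter_upwards [hr.eventually_ge_atTop (max t 1)] with n hn
    have hr0 : 0 < r n := one_pos.trans_le ((le_max_right _ _).trans hn)
    refine hconv.add_smul_sub_mem hp (hc n) ⟨by positivity, ?_⟩
    rw [← div_eq_mul_inv, div_le_one hr0]
    exact (le_max_left _ _).trans hn
  have hlim : Tendsto (fun n => p + (t * (r n)⁻¹) • (c n - p)) atTop (𝓝 (p + t • v)) := by
    have h := (tendsto_const_nhds (x := p)).add
      ((hv.const_smul t).add ((hr.inv_tendsto_atTop.const_mul t).smul_const (z - p)))
    simp only [mul_zero, zero_smul, add_zero] at h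
    refine h.congr fun n => ?_
    module
  exact hclosed.mem_of_tendsto hlim hmem

theorem exists_add_smul_mem_interior {C : Set X} (hnoasym : ∀ v : X, ¬ IsAsymptoticDir C v)
    (hint : (interior C).Nonempty) {v : X} (hv : v ≠ 0) (hrec : IsRecessionDir C v) (x : X) :
    ∃ t : ℝ, 0 ≤ t ∧ x + t • v ∈ interior C := by
  set W : Set X := {y | ∃ t : ℝ, 0 ≤ t ∧ y + t • v ∈ interior C}
  have hopen : IsOpen W := by
    have : W = ⋃ t ∈ Ici (0 : ℝ), (· + t • v) ⁻¹' interior C := by ext; simp [W]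
    rw [this]
    exact isOpen_biUnion fun t _ => isOpen_interior.preimage (by fun_prop)
  -- a point of `closure W \ W` would be the base point of an asymptotic ray
  have hclosed : IsClosed W := by
    refine isClosed_of_closure_subset fun y hy => ?_
    by_contra hyW
    refine hnoasym v ⟨hv, y, fun t ht h => hyW ⟨t, ht, h⟩, ?_⟩
    rw [Metric.tendsto_atTop]
    intro ε hε
    obtain ⟨y', ⟨t₀, ht₀, hy'⟩, hyy'⟩ := Metric.mem_closure_iff.1 hy ε hε
    refine ⟨t₀, fun t ht => ?_⟩
    have hmem : y' + t • v ∈ C := by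
      have := hrec _ (interior_subset hy') (t - t₀) (by linarith)
      rwa [add_assoc, ← add_smul, add_sub_cancel] at this
    rw [Real.dist_eq, sub_zero, abs_of_nonneg infDist_nonneg]
    calc infDist (y + t • v) C ≤ dist (y + t • v) (y' + t • v) := infDist_le_dist_of_mem hmem
      _ = dist y y' := dist_add_right _ _ _
      _ < ε := hyy'
  obtain ⟨a, ha⟩ := hint
  exact eq_univ_iff_forall.1 (IsClopen.eq_univ ⟨hclosed, hopen⟩ ⟨a, 0, le_rfl, by simpa using ha⟩) x

end Recession

section VertexCone

variable {X : Type*} [NormedAddCommGroup X] [NormedSpace ℝ X] {C : Set X} {z : X}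

theorem subset_vertexCone : C ⊆ vertexCone z C :=
  fun c hc => ⟨1, zero_le_one, c, hc, by simp⟩

theorem AffineMap.homothety_apply_eq_add_smul_sub (z : X) (s : ℝ) (x : X) :
    AffineMap.homothety z s x = z + s • (x - z) := by
  rw [AffineMap.homothety_apply, vsub_eq_sub, vadd_eq_add, add_comm]

theorem mapsTo_homothety_vertexCone {s : ℝ} (hs : 0 ≤ s) :
    MapsTo (AffineMap.homothety z s) (vertexCone z C) (vertexCone z C) := by
  rintro _ ⟨t, ht, c, hc, rfl⟩
  refine ⟨s * t, mul_nonneg hs ht, c, hc, ?_⟩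
  rw [AffineMap.homothety_apply_eq_add_smul_sub, add_sub_cancel_left, smul_smul]

theorem homothety_mem_interior_vertexCone {x : X} (hx : x ∈ interior (vertexCone z C))
    {s : ℝ} (hs : 0 < s) : z + s • (x - z) ∈ interior (vertexCone z C) := by
  rw [← AffineMap.homothety_apply_eq_add_smul_sub]
  exact (AffineMap.homothety_isOpenMap z s hs.ne').mapsTo_interior
    (mapsTo_homothety_vertexCone hs.le) hx

theorem homothety_mem_frontier_vertexCone {x : X} (hx : x ∈ frontier (vertexCone z C))
    {s : ℝ} (hs : 0 < s) : z + s • (x - z) ∈ frontier (vertexCone z C) := by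
  refine ⟨?_, fun h => hx.2 ?_⟩
  · rw [← AffineMap.homothety_apply_eq_add_smul_sub]
    exact (mapsTo_homothety_vertexCone hs.le).closure (AffineMap.homothety_continuous z s) hx.1
  · have := homothety_mem_interior_vertexCone h (inv_pos.2 hs)
    rwa [add_sub_cancel_left, smul_smul, inv_mul_cancel₀ hs.ne', one_smul,
      add_sub_cancel] at this

theorem two_smul_sub_notMem_vertexCone (hconv : Convex ℝ C) (hz : z ∉ C) {a : X} (ha : a ∈ C) :
    (2 : ℝ) • z - a ∉ vertexCone z C := by
  rintro ⟨t, ht, c, hc, hzc⟩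
  -- `z` would be the convex combination `(a + t • c) / (1 + t)` of points of `C`
  refine hz ?_
  have h1t : (0 : ℝ) < 1 + t := by linarith
  convert hconv ha hc (inv_pos.2 h1t).le (div_nonneg ht h1t.le) (by field_simp) using 1
  have : (1 + t) • z = a + t • c := by linear_combination (norm := module) hzc
  rw [div_eq_inv_mul, mul_smul, ← smul_add, ← this, smul_smul, inv_mul_cancel₀ h1t.ne', one_smul]

theorem exists_mem_frontier_vertexCone_ne (hd : 2 ≤ Module.finrank ℝ X) (hconv : Convex ℝ C)
    (hz : z ∉ C) {a : X} (ha : a ∈ C) : ∃ w ∈ frontier (vertexCone z C), w ≠ z := by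
  have hrank : 1 < Module.rank ℝ X := by
    have : Module.finrank ℝ X ≠ 0 := by omega
    have := Module.finite_of_finrank_pos (Nat.pos_of_ne_zero this)
    rw [← Module.finrank_eq_rank]
    exact_mod_cast hd
  have hzK : z ∈ vertexCone z C := ⟨0, le_rfl, a, ha, by simp⟩
  have hout := two_smul_sub_notMem_vertexCone hconv hz ha
  obtain ⟨w, hwz, hw⟩ := (isConnected_compl_singleton_of_one_lt_rank hrank z).isPreconnected
    |>.inter_frontier_nonempty (t := vertexCone z C)
      ⟨a, fun h => hz (h ▸ ha), subset_vertexCone ha⟩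
      ⟨(2 : ℝ) • z - a, fun h => hout (by rwa [mem_singleton_iff.1 h]), hout⟩
  exact ⟨w, hw, hwz⟩

end VertexCone

section Main

variable {X : Type*} [NormedAddCommGroup X] [NormedSpace ℝ X] {C : Set X} {z : X}

theorem add_mem_interior_vertexCone_of_isRecessionDir
    (hnoasym : ∀ v : X, ¬ IsAsymptoticDir C v) (hint : (interior C).Nonempty) (hz : z ∉ C)
    {v : X} (hv : v ≠ 0) (hrec : IsRecessionDir C v) : z + v ∈ interior (vertexCone z C) := by
  obtain ⟨t, ht, hmem⟩ := exists_add_smul_mem_interior hnoasym hint hv hrec z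
  have htpos : 0 < t := ht.lt_of_ne <| by
    rintro rfl
    exact hz (interior_subset (by simpa using hmem))
  have := homothety_mem_interior_vertexCone (interior_mono (subset_vertexCone (z := z)) hmem)
    (inv_pos.2 htpos)
  rwa [add_sub_cancel_left, smul_smul, inv_mul_cancel₀ htpos.ne', one_smul] at this

theorem add_mem_interior_vertexCone_of_tendsto (hclosed : IsClosed C) (hconv : Convex ℝ C)
    (hnoasym : ∀ v : X, ¬ IsAsymptoticDir C v) (hint : (interior C).Nonempty) (hz : z ∉ C)
    {c : ℕ → X} (hc : ∀ n, c n ∈ C) (hunb : Tendsto (fun n => ‖c n - z‖) atTop atTop) {e : X}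
    (he : Tendsto (fun n => normalize (c n - z)) atTop (𝓝 e)) :
    z + e ∈ interior (vertexCone z C) := by
  have hnorm : ‖e‖ = 1 := tendsto_nhds_unique he.norm <| tendsto_const_nhds.congr fun n =>
    (norm_normalize (sub_ne_zero.2 (ne_of_mem_of_not_mem (hc n) hz))).symm
  exact add_mem_interior_vertexCone_of_isRecessionDir hnoasym hint hz
    (norm_ne_zero_iff.1 (hnorm ▸ one_ne_zero)) (isRecessionDir_of_tendsto hclosed hconv hc hunb he)

theorem exists_tendsto_normalize_of_mem_closure_vertexCone {w : X}
    (hw : w ∈ closure (vertexCone z C)) (hwz : w ≠ z) :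
    ∃ c : ℕ → X, (∀ n, c n ∈ C) ∧
      Tendsto (fun n => normalize (c n - z)) atTop (𝓝 (normalize (w - z))) := by
  obtain ⟨x, hxK, hx⟩ := mem_closure_iff_seq_limit.1 hw
  choose t ht c hc hxc using hxK
  refine ⟨c, hc, ?_⟩
  refine ((continuousAt_normalize (sub_ne_zero.2 hwz)).tendsto.comp (hx.sub_const z)).congr' ?_
  filter_upwards [hx.eventually_ne hwz] with n hn
  have htn : 0 < t n := (ht n).lt_of_ne <| by
    intro h
    apply hn
    rw [hxc n, ← h, zero_smul, add_zero]
  simp only [Function.comp_apply, hxc n, add_sub_cancel_left, normalize_smul_of_pos htn]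

theorem inter_frontier_vertexCone_nonempty [FiniteDimensional ℝ X]
    (hd : 2 ≤ Module.finrank ℝ X) (hclosed : IsClosed C) (hconv : Convex ℝ C)
    (hnoasym : ∀ v : X, ¬ IsAsymptoticDir C v) (hint : (interior C).Nonempty) (hz : z ∉ C) :
    (C ∩ frontier (vertexCone z C)).Nonempty := by
  obtain ⟨w, hwF, hwz⟩ :=
    exists_mem_frontier_vertexCone_ne hd hconv hz (interior_subset hint.some_mem)
  obtain ⟨c, hc, hdir⟩ :=
    exists_tendsto_normalize_of_mem_closure_vertexCone (frontier_subset_closure hwF) hwz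
  have hwz' : 0 < ‖w - z‖ := norm_pos_iff.2 (sub_ne_zero.2 hwz)
  by_cases hunb : Tendsto (fun n => ‖c n - z‖) atTop atTop
  · have hF : z + normalize (w - z) ∈ frontier (vertexCone z C) :=
      homothety_mem_frontier_vertexCone hwF (inv_pos.2 hwz')
    exact (hF.2 (add_mem_interior_vertexCone_of_tendsto hclosed hconv hnoasym hint hz hc hunb
      hdir)).elim
  obtain ⟨M, hM⟩ : ∃ M, ∃ᶠ n in atTop, c n ∈ closedBall z M := by
    rw [Filter.tendsto_atTop] at hunb
    push Not at hunb
    obtain ⟨M, hM⟩ := hunb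
    exact ⟨M, hM.mono fun n hn => by rw [mem_closedBall, dist_eq_norm]; exact hn.le⟩
  obtain ⟨p, -, φ, hφ, hcp⟩ := (isCompact_closedBall z M).tendsto_subseq' hM
  have hpC : p ∈ C := hclosed.mem_of_tendsto hcp (Eventually.of_forall fun n => hc _)
  have hpz : p - z ≠ 0 := sub_ne_zero.2 (ne_of_mem_of_not_mem hpC hz)
  have hdir_eq : normalize (p - z) = normalize (w - z) :=
    tendsto_nhds_unique ((continuousAt_normalize hpz).tendsto.comp (hcp.sub_const z))
      (hdir.comp hφ.tendsto_atTop)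
  have hF := homothety_mem_frontier_vertexCone hwF (mul_pos (norm_pos_iff.2 hpz) (inv_pos.2 hwz'))
  rw [mul_smul, show ‖w - z‖⁻¹ • (w - z) = normalize (w - z) from rfl, ← hdir_eq,
    norm_smul_normalize, add_sub_cancel] at hF
  exact ⟨p, hpC, hF⟩

theorem isBounded_inter_frontier_vertexCone [FiniteDimensional ℝ X] (hclosed : IsClosed C)
    (hconv : Convex ℝ C) (hnoasym : ∀ v : X, ¬ IsAsymptoticDir C v)
    (hint : (interior C).Nonempty) (hz : z ∉ C) :
    Bornology.IsBounded (C ∩ frontier (vertexCone z C)) := by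
  by_contra hunb
  rw [isBounded_iff_subset_closedBall z] at hunb
  push Not at hunb
  have hfar (n : ℕ) : ∃ q ∈ C ∩ frontier (vertexCone z C), (n : ℝ) < ‖q - z‖ := by
    simpa [not_subset, dist_eq_norm] using hunb n
  choose q hq hqn using hfar
  have hqz (n : ℕ) : q n - z ≠ 0 := sub_ne_zero.2 (ne_of_mem_of_not_mem (hq n).1 hz)
  have hqunb : Tendsto (fun n => ‖q n - z‖) atTop atTop :=
    tendsto_atTop_mono (fun n => (hqn n).le) tendsto_natCast_atTop_atTop
  obtain ⟨e, -, φ, hφ, he⟩ := (isCompact_sphere (0 : X) 1).tendsto_subseq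
    (x := fun n => normalize (q n - z)) fun n => by simpa using norm_normalize (hqz n)
  have hF : z + e ∈ frontier (vertexCone z C) :=
    isClosed_frontier.mem_of_tendsto (tendsto_const_nhds.add he) <| Eventually.of_forall fun n =>
      homothety_mem_frontier_vertexCone (hq (φ n)).2 (inv_pos.2 (norm_pos_iff.2 (hqz _)))
  exact hF.2 (add_mem_interior_vertexCone_of_tendsto hclosed hconv hnoasym hint hz
    (fun n => (hq (φ n)).1) (hqunb.comp hφ.tendsto_atTop) he)

end Main

theorem stmt_9_general {X : Type*} [NormedAddCommGroup X] [NormedSpace ℝ X]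
    [FiniteDimensional ℝ X] (hd : 2 ≤ Module.finrank ℝ X)
    (C : Set X) (hclosed : IsClosed C) (hconv : Convex ℝ C)
    (hint : (interior C).Nonempty)
    (hnoasym : ∀ v : X, ¬ IsAsymptoticDir C v)
    (z : X) (hz : z ∉ C) :
    (C ∩ frontier (vertexCone z C)).Nonempty ∧ Bornology.IsBounded (C ∩ frontier (vertexCone z C)) :=
  ⟨inter_frontier_vertexCone_nonempty hd hclosed hconv hnoasym hint hz,
    isBounded_inter_frontier_vertexCone hclosed hconv hnoasym hint hz⟩

theorem stmt_9 {X : Type*} [NormedAddCommGroup X] [NormedSpace ℝ X]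
    [FiniteDimensional ℝ X] (hd : 2 ≤ Module.finrank ℝ X)
    (C : Set X) (hclosed : IsClosed C) (hconv : Convex ℝ C) (hne : C ≠ Set.univ)
    (hint : (interior C).Nonempty) (hunb : ¬ Bornology.IsBounded C)
    (hnoasym : ∀ v : X, ¬ IsAsymptoticDir C v)
    (z : X) (hz : z ∉ C) :
    (C ∩ frontier (vertexCone z C)).Nonempty ∧ Bornology.IsBounded (C ∩ frontier (vertexCone z C)) :=
  stmt_9_general hd C hclosed hconv hint hnoasym z hz
end

section
/- Let C be a convex body in a finite-dimensional normed space X, and {B_n} an increasing sequence of convex bodies contained in C. Then C = ⋃_n int_C B_n if and only if for each r > 0 there exists m ∈ ℕ with C ∩ r·B_X ⊆ B_m. -/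
/-- The relative interior of `B` in the subspace topology of `C`. -/
def relInt {X : Type*} [NormedAddCommGroup X] [NormedSpace ℝ X]
    (C B : Set X) : Set X :=
  C \ closure (C \ B)

theorem stmt_11 {X : Type*} [NormedAddCommGroup X] [NormedSpace ℝ X]
    [FiniteDimensional ℝ X]
    (C : Set X) (hclosed : IsClosed C) (hconv : Convex ℝ C) (hne : C ≠ Set.univ)
    (hint : (interior C).Nonempty)
    (B : ℕ → Set X)
    (hB : ∀ n, IsClosed (B n) ∧ Convex ℝ (B n) ∧ B n ≠ Set.univ ∧
      (interior (B n)).Nonempty ∧ B n ⊆ C)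
    (hmono : ∀ n, B n ⊆ B (n + 1)) :
    C = ⋃ n, relInt C (B n) ↔
      ∀ r : ℝ, 0 < r → ∃ m : ℕ, C ∩ Metric.closedBall (0 : X) r ⊆ B m := by
  have hBmono : Monotone B := monotone_nat_of_le_succ hmono
  have hUmono : Monotone fun n => (closure (C \ B n))ᶜ := fun i j hij =>
    Set.compl_subset_compl.2 (closure_mono (Set.diff_subset_diff_right (hBmono hij)))
  constructor
  · intro hC r hr
    have hK : IsCompact (C ∩ Metric.closedBall (0 : X) r) :=
      (isCompact_closedBall 0 r).inter_left hclosed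
    have hcover : C ∩ Metric.closedBall 0 r ⊆ ⋃ n, (closure (C \ B n))ᶜ := by
      intro x hx
      have hxC := hx.1
      rw [hC] at hxC
      obtain ⟨n, hn⟩ := Set.mem_iUnion.1 hxC
      exact Set.mem_iUnion.2 ⟨n, hn.2⟩
    obtain ⟨t, ht⟩ := hK.elim_finite_subcover _
      (fun n => isClosed_closure.isOpen_compl) hcover
    refine ⟨t.sup id, fun x hx => ?_⟩
    have hxU : x ∈ (closure (C \ B (t.sup id)))ᶜ := by
      obtain ⟨n, hn, hxn⟩ := Set.mem_iUnion₂.1 (ht hx)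
      exact hUmono (Finset.le_sup (f := id) hn) hxn
    by_contra h
    exact hxU (subset_closure ⟨hx.1, h⟩)
  · intro h
    apply Set.Subset.antisymm
    · intro x hx
      obtain ⟨m, hm⟩ := h (‖x‖ + 1) (by positivity)
      refine Set.mem_iUnion.2 ⟨m, hx, ?_⟩
      intro hxc
      have hsub : C \ B m ⊆ {y : X | ‖x‖ + 1 ≤ ‖y‖} := by
        intro y hy
        by_contra hlt
        simp only [Set.mem_setOf_eq, not_le] at hlt
        exact hy.2 (hm ⟨hy.1, by
          simpa [Metric.mem_closedBall, dist_zero_right] using hlt.le⟩)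
      have hcl : IsClosed {y : X | ‖x‖ + 1 ≤ ‖y‖} :=
        isClosed_le continuous_const continuous_norm
      have := hcl.closure_subset_iff.2 hsub hxc
      simp only [Set.mem_setOf_eq] at this
      linarith
    · exact Set.iUnion_subset fun n x hx => hx.1
end

section
/- Let C be a convex body containing no lines in an arbitrary normed space, B ⊆ C a convex body, x ∈ e(B) \ C and y ∈ C \ B. Then the segment [x,y] meets B. -/
/-- `K(y,B)`: the intersection of all closed half-spaces `[g ≤ g y]` over norm-one
functionals `g` supporting `B` at `y`. -/
def Kset {X : Type*} [NormedAddCommGroup X] [NormedSpace ℝ X]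
    (B : Set X) (y : X) : Set X :=
  ⋂ g ∈ {g : X →L[ℝ] ℝ | ‖g‖ = 1 ∧ ∀ z ∈ B, g z ≤ g y}, {z : X | g z ≤ g y}

/-- The relative boundary of `B` in the subspace topology of `C`. -/
def relBdry {X : Type*} [NormedAddCommGroup X] [NormedSpace ℝ X]
    (C B : Set X) : Set X :=
  (C ∩ closure B) ∩ closure (C \ B)

/-- The extension `e(B)` of a convex body `B ⊆ C`. -/
def eExt {X : Type*} [NormedAddCommGroup X] [NormedSpace ℝ X]
    (C B : Set X) : Set X :=
  ⋂ y ∈ relBdry C B, Kset B y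

open Filter Topology Set
lemma aux_closure_interior {X : Type*} [NormedAddCommGroup X] [NormedSpace ℝ X]
    {s : Set X} (hs : Convex ℝ s) {b z : X} (hb : b ∈ interior s) (hz : z ∈ s) :
    z ∈ closure (interior s) := by
  have ht : Tendsto (fun n : ℕ => 1/((n:ℝ)+1)) atTop (𝓝 0) :=
    tendsto_one_div_add_atTop_nhds_zero_nat
  have hmem : ∀ n : ℕ, (1/((n:ℝ)+1)) • b + (1 - 1/((n:ℝ)+1)) • z ∈ interior s := by
    intro n
    refine hs.combo_interior_closure_mem_interior hb (subset_closure hz) (by positivity) ?_ (by ring)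
    rw [sub_nonneg, div_le_one (by positivity)]
    linarith [Nat.cast_nonneg (α := ℝ) n]
  have htend : Tendsto (fun n : ℕ => (1/((n:ℝ)+1)) • b + (1 - 1/((n:ℝ)+1)) • z) atTop
      (𝓝 ((0:ℝ) • b + (1 - (0:ℝ)) • z)) :=
    (ht.smul_const b).add ((tendsto_const_nhds.sub ht).smul_const z)
  have h2 := mem_closure_of_tendsto htend (Filter.Eventually.of_forall hmem)
  simpa using h2

lemma aux_support {X : Type*} [NormedAddCommGroup X] [NormedSpace ℝ X]
    {B : Set X} (hBconv : Convex ℝ B) {b w : X} (hb : b ∈ interior B)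
    (hwni : w ∉ interior B) :
    ∃ g : X →L[ℝ] ℝ, ‖g‖ = 1 ∧ (∀ z ∈ B, g z ≤ g w) ∧ g b < g w := by
  obtain ⟨f, hf⟩ := geometric_hahn_banach_open_point hBconv.interior isOpen_interior hwni
  have hfB : ∀ z ∈ B, f z ≤ f w := by
    intro z hz
    have h1 : closure (interior B) ⊆ {v | f v ≤ f w} :=
      closure_minimal (fun a ha => (hf a ha).le) (isClosed_le f.continuous continuous_const)
    exact h1 (aux_closure_interior hBconv hb hz)
  have hfb : f b < f w := hf b hb
  have hf0 : f ≠ 0 := by intro h; rw [h] at hfb; simp at hfb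
  have hn : (0:ℝ) < ‖f‖ := norm_pos_iff.2 hf0
  refine ⟨‖f‖⁻¹ • f, norm_smul_inv_norm hf0, ?_, ?_⟩
  · intro z hz
    simp only [ContinuousLinearMap.coe_smul', Pi.smul_apply, smul_eq_mul]
    exact mul_le_mul_of_nonneg_left (hfB z hz) (inv_pos.2 hn).le
  · simp only [ContinuousLinearMap.coe_smul', Pi.smul_apply, smul_eq_mul]
    exact mul_lt_mul_of_pos_left hfb (inv_pos.2 hn)

lemma aux_Kx {X : Type*} [NormedAddCommGroup X] [NormedSpace ℝ X]
    {C B : Set X} {x w : X} (hx : x ∈ eExt C B) (hw : w ∈ relBdry C B)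
    (f : X →L[ℝ] ℝ) (hf0 : f ≠ 0) (hsup : ∀ z ∈ B, f z ≤ f w) : f x ≤ f w := by
  have hn : (0:ℝ) < ‖f‖ := norm_pos_iff.2 hf0
  have hxK : x ∈ Kset B w := by
    simp only [eExt, Set.mem_iInter] at hx
    exact hx w hw
  have hg : (‖f‖⁻¹ • f) ∈ {g : X →L[ℝ] ℝ | ‖g‖ = 1 ∧ ∀ z ∈ B, g z ≤ g w} := by
    refine ⟨norm_smul_inv_norm hf0, fun z hz => ?_⟩
    simp only [ContinuousLinearMap.coe_smul', Pi.smul_apply, smul_eq_mul]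
    exact mul_le_mul_of_nonneg_left (hsup z hz) (inv_pos.2 hn).le
  simp only [Kset, Set.mem_iInter] at hxK
  have := hxK _ hg
  simp only [Set.mem_setOf_eq, ContinuousLinearMap.coe_smul', Pi.smul_apply, smul_eq_mul] at this
  exact le_of_mul_le_mul_left this (inv_pos.2 hn)


set_option maxHeartbeats 1000000 in
theorem stmt_13 {X : Type*} [NormedAddCommGroup X] [NormedSpace ℝ X]
    (C : Set X) (hclosed : IsClosed C) (hconv : Convex ℝ C) (hne : C ≠ Set.univ)
    (hint : (interior C).Nonempty)
    (hnoline : ¬ ∃ (p v : X), v ≠ 0 ∧ ∀ t : ℝ, p + t • v ∈ C)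
    (B : Set X) (hBclosed : IsClosed B) (hBconv : Convex ℝ B)
    (hBint : (interior B).Nonempty) (hBC : B ⊆ C)
    (x : X) (hx : x ∈ eExt C B \ C) (y : X) (hy : y ∈ C \ B) :
    (segment ℝ x y ∩ B).Nonempty := by
  obtain ⟨hxE, hxC⟩ := hx
  obtain ⟨hyC, hyB⟩ := hy
  by_contra hcon
  obtain ⟨b, hb⟩ := hBint
  have hbB : b ∈ B := interior_subset hb
  have hbC : b ∈ C := hBC hbB
  have hbintC : b ∈ interior C := interior_mono hBC hb
  -- the translated set A = B - b
  set A : Set X := (fun v => -b + v) '' B with hAdef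
  have hAconv : Convex ℝ A := hBconv.translate (-b)
  have hAeq : ⇑(Homeomorph.addLeft (-b)) = (fun v : X => -b + v) := rfl
  have hAclosed : IsClosed A := by
    rw [hAdef, ← hAeq]; exact (Homeomorph.addLeft (-b)).isClosedMap B hBclosed
  have memA : ∀ v : X, v ∈ A ↔ b + v ∈ B := by
    intro v
    constructor
    · rintro ⟨z, hz, rfl⟩; simpa using hz
    · intro hv; exact ⟨b + v, hv, by simp⟩
  have memIntA : ∀ v : X, v ∈ interior A ↔ b + v ∈ interior B := by
    intro v
    have h1 : interior A = (fun v : X => -b + v) '' interior B := by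
      rw [← hAeq, Homeomorph.image_interior, hAeq, ← hAdef]
    rw [h1]
    constructor
    · rintro ⟨z, hz, rfl⟩; simpa using hz
    · intro hv; exact ⟨b + v, hv, by simp⟩
  have hAnhds : A ∈ 𝓝 (0:X) := by
    rw [← mem_interior_iff_mem_nhds]
    rw [memIntA]; simpa using hb
  have hgle : ∀ v : X, gauge A v ≤ 1 ↔ b + v ∈ B := by
    intro v
    rw [gauge_le_one_iff_mem_closure hAconv hAnhds, hAclosed.closure_eq, memA]
  have hglt : ∀ v : X, gauge A v < 1 ↔ b + v ∈ interior B := by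
    intro v
    rw [gauge_lt_one_iff_mem_interior hAconv hAnhds, memIntA]
  -- the segment parametrization
  set q : ℝ → X := fun s => x + s • (y - x) with hqdef
  have hqc : Continuous q := by fun_prop
  have hqB : ∀ s ∈ Icc (0:ℝ) 1, q s ∉ B := by
    intro s hs hmem
    exact hcon ⟨q s, by rw [segment_eq_image']; exact ⟨s, hs, rfl⟩, hmem⟩
  have hq0 : q 0 = x := by simp [hqdef]
  have hq1 : q 1 = y := by simp [hqdef]
  set m : ℝ → ℝ := fun s => gauge A (q s - b) with hmdef
  have hmc : Continuous m := (continuous_gauge hAconv hAnhds).comp (hqc.sub continuous_const)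
  have hm1 : ∀ s ∈ Icc (0:ℝ) 1, 1 < m s := by
    intro s hs
    by_contra h
    push_neg at h
    exact hqB s hs ((hgle (q s - b)).1 h |> fun h2 => by simpa using h2)
  have hm0 : ∀ s ∈ Icc (0:ℝ) 1, (0:ℝ) < m s := fun s hs => zero_lt_one.trans (hm1 s hs)
  set z : ℝ → X := fun s => b + (m s)⁻¹ • (q s - b) with hzdef
  have hzc : ContinuousOn z (Icc (0:ℝ) 1) := by
    refine continuousOn_const.add (ContinuousOn.smul ?_ ((hqc.sub continuous_const).continuousOn))
    exact (hmc.continuousOn).inv₀ fun s hs => (hm0 s hs).ne'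
  have hzg : ∀ s ∈ Icc (0:ℝ) 1, gauge A ((m s)⁻¹ • (q s - b)) = 1 := by
    intro s hs
    rw [gauge_smul_of_nonneg (inv_pos.2 (hm0 s hs)).le, smul_eq_mul]
    exact inv_mul_cancel₀ (hm0 s hs).ne'
  have hzB : ∀ s ∈ Icc (0:ℝ) 1, z s ∈ B := by
    intro s hs
    exact (hgle _).1 (le_of_eq (hzg s hs))
  -- the coefficient function
  set c : ℝ → ℝ → ℝ := fun s t => (m s)⁻¹ + t * (1 - (m s)⁻¹) with hcdef
  have hcpos : ∀ s ∈ Icc (0:ℝ) 1, ∀ t : ℝ, 0 ≤ t → 0 < c s t := by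
    intro s hs t ht
    have h1 : (m s)⁻¹ < 1 := inv_lt_one_of_one_lt₀ (hm1 s hs)
    have h2 : 0 < (m s)⁻¹ := inv_pos.2 (hm0 s hs)
    simp only [hcdef]
    nlinarith
  have hcle : ∀ s ∈ Icc (0:ℝ) 1, ∀ t : ℝ, t ≤ 1 → c s t ≤ 1 := by
    intro s hs t ht
    have h1 : (m s)⁻¹ < 1 := inv_lt_one_of_one_lt₀ (hm1 s hs)
    simp only [hcdef]
    nlinarith
  have hcmem : ∀ s ∈ Icc (0:ℝ) 1, ∀ t : ℝ, 0 < t →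
      gauge A ((c s t) • (q s - b)) = 1 + t * (m s - 1) := by
    intro s hs t ht
    rw [gauge_smul_of_nonneg (hcpos s hs t ht.le).le, smul_eq_mul]
    have hinv : (m s)⁻¹ * m s = 1 := inv_mul_cancel₀ (hm0 s hs).ne'
    calc c s t * m s = ((m s)⁻¹ * m s) + t * (m s - ((m s)⁻¹ * m s)) := by
          simp only [hcdef]; ring
      _ = 1 + t * (m s - 1) := by rw [hinv]
  have hcnotB : ∀ s ∈ Icc (0:ℝ) 1, ∀ t : ℝ, 0 < t → b + (c s t) • (q s - b) ∉ B := by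
    intro s hs t ht hmem
    have := (hgle _).2 hmem
    rw [hcmem s hs t ht] at this
    nlinarith [hm1 s hs]
  -- membership in C of the combination points
  have hcomb : ∀ p : X, p ∈ C → ∀ r : ℝ, 0 ≤ r → r ≤ 1 → b + r • (p - b) ∈ C := by
    intro p hp r h0 h1
    have := hconv hbC hp (by linarith : (0:ℝ) ≤ 1 - r) h0 (by ring)
    convert this using 1
    module
  -- the set T
  set T : Set ℝ := Icc (0:ℝ) 1 ∩ z ⁻¹' closure (C \ B) with hTdef
  have hT1 : (1:ℝ) ∈ T := by
    refine ⟨⟨zero_le_one, le_refl 1⟩, ?_⟩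
    have h1 : (1:ℝ) ∈ Icc (0:ℝ) 1 := ⟨zero_le_one, le_refl 1⟩
    have hmem : ∀ n : ℕ, b + (c 1 (1/((n:ℝ)+1))) • (q 1 - b) ∈ C \ B := by
      intro n
      have htn : (0:ℝ) < 1/((n:ℝ)+1) := by positivity
      have htn1 : (1:ℝ)/((n:ℝ)+1) ≤ 1 := by
        rw [div_le_one (by positivity)]; linarith [Nat.cast_nonneg (α := ℝ) n]
      constructor
      · rw [hq1]
        exact hcomb y hyC _ (hcpos 1 h1 _ htn.le).le (hcle 1 h1 _ htn1)
      · exact hcnotB 1 h1 _ htn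
    have htend : Tendsto (fun n : ℕ => b + (c 1 (1/((n:ℝ)+1))) • (q 1 - b)) atTop (𝓝 (z 1)) := by
      have ht : Tendsto (fun n : ℕ => 1/((n:ℝ)+1)) atTop (𝓝 0) :=
        tendsto_one_div_add_atTop_nhds_zero_nat
      have hc : Tendsto (fun n : ℕ => c 1 (1/((n:ℝ)+1))) atTop (𝓝 ((m 1)⁻¹)) := by
        have := (tendsto_const_nhds (x := (m 1)⁻¹)).add (ht.mul (tendsto_const_nhds (x := 1 - (m 1)⁻¹)))
        simpa using this
      have := tendsto_const_nhds (x := b) |>.add (hc.smul_const (q 1 - b))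
      simpa [hzdef] using this
    exact mem_closure_of_tendsto htend (Filter.Eventually.of_forall hmem)
  have h0T : z 0 ∉ closure (C \ B) := by
    intro hcl
    have h0 : (0:ℝ) ∈ Icc (0:ℝ) 1 := ⟨le_refl 0, zero_le_one⟩
    have hzB0 : z 0 ∈ B := hzB 0 h0
    have hni : z 0 ∉ interior B := by
      intro hin
      have : gauge A ((m 0)⁻¹ • (q 0 - b)) < 1 := (hglt _).2 hin
      rw [hzg 0 h0] at this
      exact lt_irrefl _ this
    obtain ⟨g, hg1, hgB, hgb⟩ := aux_support hBconv hb hni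
    have hrel : z 0 ∈ relBdry C B := ⟨⟨hBC hzB0, subset_closure hzB0⟩, hcl⟩
    have hgx : g x ≤ g (z 0) := by
      have hxK : x ∈ Kset B (z 0) := by
        simp only [eExt, Set.mem_iInter] at hxE
        exact hxE _ hrel
      simp only [Kset, Set.mem_iInter] at hxK
      exact hxK g ⟨hg1, hgB⟩
    have heq : g (z 0) = g b + (m 0)⁻¹ * (g x - g b) := by
      have hz0 : z 0 = b + (m 0)⁻¹ • (x - b) := by simp only [hzdef]; rw [hq0]
      rw [hz0, map_add, map_smul, map_sub, smul_eq_mul]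
    have h1 : (m 0)⁻¹ < 1 := inv_lt_one_of_one_lt₀ (hm1 0 h0)
    have h2 : 0 < (m 0)⁻¹ := inv_pos.2 (hm0 0 h0)
    nlinarith [hgb, hgx, heq]
  have hTc : IsClosed T :=
    hzc.preimage_isClosed_of_isClosed isClosed_Icc isClosed_closure
  have hTbdd : BddBelow T := ⟨0, fun s hs => hs.1.1⟩
  set sb : ℝ := sInf T with hsbdef
  have hsbT : sb ∈ T := hTc.csInf_mem ⟨1, hT1⟩ hTbdd
  have hsI : sb ∈ Icc (0:ℝ) 1 := hsbT.1
  have hscl : z sb ∈ closure (C \ B) := hsbT.2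
  have hsbne : sb ≠ 0 := by
    intro h
    rw [h] at hscl
    exact h0T hscl
  have hspos : 0 < sb := lt_of_le_of_ne hsI.1 (Ne.symm hsbne)
  -- Step 4
  have hstep4 : ∀ s : ℝ, 0 ≤ s → s < sb → ∀ t : ℝ, 0 < t → t ≤ 1 →
      b + (c s t) • (q s - b) ∉ C := by
    intro s hs0 hss t ht0 ht1 hpC
    have hsI' : s ∈ Icc (0:ℝ) 1 := ⟨hs0, hss.le.trans hsI.2⟩
    have hzs : z s ∉ closure (C \ B) := by
      intro h
      exact absurd (csInf_le hTbdd ⟨hsI', h⟩) (not_le.2 hss)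
    rw [Metric.mem_closure_iff] at hzs
    push_neg at hzs
    obtain ⟨ε, hε, hball⟩ := hzs
    set K : ℝ := (1 - (m s)⁻¹) * ‖q s - b‖ with hKdef
    have hminv1 : (m s)⁻¹ < 1 := inv_lt_one_of_one_lt₀ (hm1 s hsI')
    have hK0 : 0 ≤ K := mul_nonneg (by linarith) (norm_nonneg _)
    set t' : ℝ := min (t/2) (ε / (2 * (K + 1))) with ht'def
    have ht'0 : 0 < t' := lt_min (by linarith) (by positivity)
    have ht't : t' ≤ t := (min_le_left _ _).trans (by linarith)
    have ht'e : t' ≤ ε / (2 * (K + 1)) := min_le_right _ _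
    have hdist : dist (z s) (b + (c s t') • (q s - b)) < ε := by
      have hsub : z s - (b + (c s t') • (q s - b)) = (-(t' * (1 - (m s)⁻¹))) • (q s - b) := by
        simp only [hzdef, hcdef]
        module
      rw [dist_eq_norm, hsub, norm_smul, Real.norm_eq_abs, abs_neg,
        abs_of_nonneg (by nlinarith : (0:ℝ) ≤ t' * (1 - (m s)⁻¹))]
      have : t' * (1 - (m s)⁻¹) * ‖q s - b‖ = t' * K := by rw [hKdef]; ring
      rw [this]
      calc t' * K ≤ (ε / (2 * (K + 1))) * K := by nlinarith
        _ < ε := by rw [div_mul_eq_mul_div, div_lt_iff₀ (by positivity)]; nlinarith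
    have hp'B : b + (c s t') • (q s - b) ∉ B := hcnotB s hsI' t' ht'0
    have hp'C : b + (c s t') • (q s - b) ∈ C := by
      have hct : 0 < c s t := hcpos s hsI' t ht0.le
      have hct' : 0 < c s t' := hcpos s hsI' t' ht'0.le
      have hmono : c s t' ≤ c s t := by
        simp only [hcdef]
        nlinarith
      have hfrac : b + (c s t') • (q s - b)
          = b + ((c s t') / (c s t)) • ((b + (c s t) • (q s - b)) - b) := by
        rw [add_sub_cancel_left, smul_smul, div_mul_cancel₀ _ hct.ne']
      rw [hfrac]
      exact hcomb _ hpC _ (div_nonneg hct'.le hct.le) (div_le_one_of_le₀ hmono hct.le)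
    exact absurd hdist (not_lt.2 (hball _ ⟨hp'C, hp'B⟩))
  -- Step 5
  have hstep5 : ∀ t : ℝ, 0 < t → t ≤ 1 → b + (c sb t) • (q sb - b) ∉ interior C := by
    intro t ht0 ht1
    have hcont : ContinuousOn (fun s => b + (c s t) • (q s - b)) (Icc (0:ℝ) 1) := by
      have hminv : ContinuousOn (fun s => (m s)⁻¹) (Icc (0:ℝ) 1) :=
        (hmc.continuousOn).inv₀ fun s hs => (hm0 s hs).ne'
      have hcc : ContinuousOn (fun s => c s t) (Icc (0:ℝ) 1) := by
        simp only [hcdef]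
        exact hminv.add (continuousOn_const.mul (continuousOn_const.sub hminv))
      exact continuousOn_const.add (hcc.smul ((hqc.sub continuous_const).continuousOn))
    have hsub : Ico (0:ℝ) sb ⊆ Icc (0:ℝ) 1 := fun u hu => ⟨hu.1, hu.2.le.trans hsI.2⟩
    have htend : Tendsto (fun s => b + (c s t) • (q s - b)) (𝓝[Ico (0:ℝ) sb] sb)
        (𝓝 (b + (c sb t) • (q sb - b))) :=
      (hcont sb hsI).mono_left (nhdsWithin_mono _ hsub)
    have hNB : (𝓝[Ico (0:ℝ) sb] sb).NeBot := by
      rw [← mem_closure_iff_nhdsWithin_neBot, closure_Ico hsbne.symm]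
      exact ⟨hspos.le, le_refl sb⟩
    have hev : ∀ᶠ s in 𝓝[Ico (0:ℝ) sb] sb,
        (fun s => b + (c s t) • (q s - b)) s ∈ (interior C)ᶜ := by
      refine eventually_nhdsWithin_of_forall fun s hs => ?_
      intro hin
      exact hstep4 s hs.1 hs.2 t ht0 ht1 (interior_subset hin)
    exact isOpen_interior.isClosed_compl.mem_of_tendsto htend hev
  -- Step 6
  set L : ℝ →ᵃ[ℝ] X := AffineMap.lineMap (z sb) (q sb) with hLdef
  have hL : ∀ t : ℝ, L t = b + (c sb t) • (q sb - b) := by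
    intro t
    rw [hLdef, AffineMap.lineMap_apply]
    simp only [hzdef, hcdef, vsub_eq_sub, vadd_eq_add]
    module
  set R : Set X := L '' Ioc (0:ℝ) 1 with hRdef
  have hRconv : Convex ℝ R := Convex.affine_image L (convex_Ioc 0 1)
  have hdisj : Disjoint (interior C) R := by
    rw [Set.disjoint_left]
    rintro a ha ⟨t, ht, rfl⟩
    rw [hL] at ha
    exact hstep5 t ht.1 ht.2 ha
  obtain ⟨f, u, hfu, huf⟩ :=
    geometric_hahn_banach_open hconv.interior isOpen_interior hRconv hdisj
  have hCle : ∀ v ∈ C, f v ≤ u := by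
    intro v hv
    have h1 : closure (interior C) ⊆ {w | f w ≤ u} :=
      closure_minimal (fun a ha => (hfu a ha).le) (isClosed_le f.continuous continuous_const)
    exact h1 (aux_closure_interior hconv hbintC hv)
  have hfq : u ≤ f (q sb) := by
    refine huf (q sb) ⟨1, ⟨zero_lt_one, le_refl 1⟩, ?_⟩
    rw [hLdef]; exact AffineMap.lineMap_apply_one _ _
  have hfw_le : f (z sb) ≤ u := hCle _ (hBC (hzB sb hsI))
  have hfw_ge : u ≤ f (z sb) := by
    have hLc : Continuous fun t : ℝ => f (L t) := by
      have : Continuous fun t : ℝ => L t := by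
        simp only [hLdef, AffineMap.coe_lineMap]
        fun_prop
      exact f.continuous.comp this
    have ht : Tendsto (fun n : ℕ => 1/((n:ℝ)+1)) atTop (𝓝 0) :=
      tendsto_one_div_add_atTop_nhds_zero_nat
    have htend : Tendsto (fun n : ℕ => f (L (1/((n:ℝ)+1)))) atTop (𝓝 (f (L 0))) :=
      (hLc.tendsto 0).comp ht
    have hL0 : L 0 = z sb := by rw [hLdef]; exact AffineMap.lineMap_apply_zero _ _
    rw [← hL0]
    refine ge_of_tendsto htend (Filter.Eventually.of_forall fun n => ?_)
    refine huf _ ⟨1/((n:ℝ)+1), ⟨by positivity, ?_⟩, rfl⟩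
    rw [div_le_one (by positivity)]
    linarith [Nat.cast_nonneg (α := ℝ) n]
  have hfw : f (z sb) = u := le_antisymm hfw_le hfw_ge
  have hfb : f b < u := hfu b hbintC
  have hfB : ∀ v ∈ B, f v ≤ f (z sb) := by
    intro v hv
    rw [hfw]
    exact hCle v (hBC hv)
  have hf0 : f ≠ 0 := by
    intro h
    rw [h] at hfb hfq
    simp only [ContinuousLinearMap.zero_apply] at hfb hfq
    linarith
  have hrelw : z sb ∈ relBdry C B :=
    ⟨⟨hBC (hzB sb hsI), subset_closure (hzB sb hsI)⟩, hscl⟩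
  have hfx : f x ≤ f (z sb) := aux_Kx hxE hrelw f hf0 hfB
  have hfx' : f x ≤ u := hfw ▸ hfx
  have hfy : f y ≤ u := hCle y hyC
  have hfp_le : f (q sb) ≤ u := by
    have heq : f (q sb) = f x + sb * (f y - f x) := by
      have hqs : q sb = x + sb • (y - x) := by simp only [hqdef]
      rw [hqs, map_add, map_smul, map_sub, smul_eq_mul]
    rw [heq]
    nlinarith [mul_nonneg (sub_nonneg.2 hsI.2) (sub_nonneg.2 hfx'),
      mul_nonneg hsI.1 (sub_nonneg.2 hfy)]
  have hfp : f (q sb) = u := le_antisymm hfp_le hfq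
  have heqf : f (z sb) = f b + (m sb)⁻¹ * (f (q sb) - f b) := by
    have hzs : z sb = b + (m sb)⁻¹ • (q sb - b) := by simp only [hzdef]
    rw [hzs, map_add, map_smul, map_sub, smul_eq_mul]
  rw [hfw, hfp] at heqf
  have hminv1 : (m sb)⁻¹ < 1 := inv_lt_one_of_one_lt₀ (hm1 sb hsI)
  have hminv0 : 0 < (m sb)⁻¹ := inv_pos.2 (hm0 sb hsI)
  nlinarith [mul_pos (sub_pos.2 hfb) (sub_pos.2 hminv1)]
end

section
/- Let X be a finite-dimensional normed space of dimension ≥ 2, let B ⊊ C be convex bodies in X with C rotund. Then the relative interior of B in C is contained in the interior (in X) of e(B). -/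
set_option maxHeartbeats 1000000

open Filter Topology Metric

theorem stmt_14 {X : Type*} [NormedAddCommGroup X] [NormedSpace ℝ X]
    [FiniteDimensional ℝ X] (hd : 2 ≤ Module.finrank ℝ X)
    (C : Set X) (hclosed : IsClosed C) (hconv : Convex ℝ C) (hne : C ≠ Set.univ)
    (hint : (interior C).Nonempty)
    (hrotund : ∀ x ∈ C, ∀ y ∈ C, x ≠ y → midpoint ℝ x y ∈ interior C)
    (B : Set X) (hBclosed : IsClosed B) (hBconv : Convex ℝ B)
    (hBint : (interior B).Nonempty) (hBC : B ⊆ C) (hBne : B ≠ C) :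
    relInt C B ⊆ interior (eExt C B) := by
  intro x hx
  obtain ⟨hxC, hxcl⟩ := hx
  have hxB : x ∈ B := by
    by_contra h
    exact hxcl (subset_closure ⟨hxC, h⟩)
  have key : ∃ δ > (0:ℝ), ∀ y ∈ relBdry C B, ∀ g : X →L[ℝ] ℝ, ‖g‖ = 1 →
      (∀ z ∈ B, g z ≤ g y) → g x + δ ≤ g y := by
    by_contra hkey
    push_neg at hkey
    have hseq : ∀ n : ℕ, ∃ y ∈ relBdry C B, ∃ g : X →L[ℝ] ℝ, ‖g‖ = 1 ∧
        (∀ z ∈ B, g z ≤ g y) ∧ g y < g x + 1/(n+1) := by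
      intro n
      obtain ⟨y, hy, g, hg1, hg2, hg3⟩ := hkey (1/(n+1)) (by positivity)
      exact ⟨y, hy, g, hg1, hg2, hg3⟩
    choose Y hY g hg hsupp hlt using hseq
    have hYC : ∀ n, Y n ∈ C := fun n => (hY n).1.1
    have hYcl : ∀ n, Y n ∈ closure (C \ B) := fun n => (hY n).2
    have hYne : ∀ n, Y n ≠ x := fun n h => hxcl (h ▸ hYcl n)
    set a : ℕ → ℝ := fun n => ‖Y n - x‖ with ha
    have hapos : ∀ n, 0 < a n := fun n => by
      simpa [ha] using sub_ne_zero.2 (hYne n)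
    set t : ℕ → ℝ := fun n => min 1 (1 / a n) with ht
    have ht0 : ∀ n, 0 < t n := fun n => lt_min one_pos (div_pos one_pos (hapos n))
    have ht1 : ∀ n, t n ≤ 1 := fun n => min_le_left _ _
    set w : ℕ → X := fun n => x + t n • (Y n - x) with hw
    have hwC : ∀ n, w n ∈ C := by
      intro n
      have h := hconv hxC (hYC n) (sub_nonneg.2 (ht1 n)) (le_of_lt (ht0 n))
        (by ring)
      have he : (1 - t n) • x + t n • Y n = w n := by
        simp only [hw]; module
      rwa [he] at h
    have hwnorm : ∀ n, ‖w n - x‖ = min (a n) 1 := by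
      intro n
      have he : w n - x = t n • (Y n - x) := by simp only [hw]; abel
      rw [he, norm_smul, Real.norm_eq_abs, abs_of_pos (ht0 n)]
      show min 1 (1 / a n) * ‖Y n - x‖ = min (a n) 1
      rcases le_total (a n) 1 with hle | hle
      · have : (1:ℝ) ≤ 1 / a n := by
          rw [le_div_iff₀ (hapos n)]; simpa using hle
        rw [min_eq_left this, one_mul, min_eq_left hle]
      · have : (1:ℝ) / a n ≤ 1 := by
          rw [div_le_iff₀ (hapos n)]; simpa using hle
        rw [min_eq_right this, min_eq_right hle, one_div,
          inv_mul_cancel₀ (ne_of_gt (hapos n))]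
    have hgw : ∀ n, g n (w n) = g n x + t n * (g n (Y n) - g n x) := by
      intro n
      simp only [hw, map_add, map_smul, map_sub, smul_eq_mul]
      try ring
    have hgap0 : ∀ n, 0 ≤ g n (Y n) - g n x :=
      fun n => sub_nonneg.2 (hsupp n x hxB)
    have hgwlo : ∀ n, g n x ≤ g n (w n) := by
      intro n
      rw [hgw n]
      nlinarith [mul_nonneg (le_of_lt (ht0 n)) (hgap0 n)]
    have hgwhi : ∀ n, g n (w n) ≤ g n x + 1/(n+1) := by
      intro n
      rw [hgw n]
      have h1 : t n * (g n (Y n) - g n x) ≤ g n (Y n) - g n x :=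
        mul_le_of_le_one_left (hgap0 n) (ht1 n)
      have h2 := hlt n
      linarith
    have hcpt : IsCompact ((sphere (0 : X →L[ℝ] ℝ) 1) ×ˢ (closedBall x 1)) :=
      (isCompact_sphere 0 1).prod (isCompact_closedBall x 1)
    have hmem : ∀ n, (g n, w n) ∈ (sphere (0 : X →L[ℝ] ℝ) 1) ×ˢ (closedBall x 1) := by
      intro n
      refine ⟨mem_sphere_zero_iff_norm.2 (hg n), ?_⟩
      rw [mem_closedBall, dist_eq_norm, hwnorm n]
      exact min_le_right _ _
    obtain ⟨⟨G, W⟩, hGWmem, φ, hφ, hconv'⟩ := hcpt.tendsto_subseq hmem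
    have hGnorm : ‖G‖ = 1 := mem_sphere_zero_iff_norm.1 hGWmem.1
    have hgφ : Tendsto (fun n => g (φ n)) atTop (𝓝 G) :=
      (continuous_fst.tendsto _).comp hconv'
    have hwφ : Tendsto (fun n => w (φ n)) atTop (𝓝 W) :=
      (continuous_snd.tendsto _).comp hconv'
    have heval : ∀ b : X, Tendsto (fun n => g (φ n) b) atTop (𝓝 (G b)) := by
      intro b
      exact (isBoundedBilinearMap_apply.continuous.tendsto (G, b)).comp
        (hgφ.prodMk_nhds tendsto_const_nhds)
    have hevalW : Tendsto (fun n => g (φ n) (w (φ n))) atTop (𝓝 (G W)) :=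
      (isBoundedBilinearMap_apply.continuous.tendsto (G, W)).comp
        (hgφ.prodMk_nhds hwφ)
    have hδ0 : Tendsto (fun n => 1 / ((φ n : ℝ) + 1)) atTop (𝓝 0) :=
      tendsto_one_div_add_atTop_nhds_zero_nat.comp hφ.tendsto_atTop
    have hup : Tendsto (fun n => g (φ n) x + 1/((φ n : ℝ)+1)) atTop (𝓝 (G x)) := by
      simpa using (heval x).add hδ0
    have hGB : ∀ b ∈ B, G b ≤ G x := by
      intro b hb
      refine le_of_tendsto_of_tendsto' (heval b) hup (fun n => ?_)
      calc g (φ n) b ≤ g (φ n) (Y (φ n)) := hsupp _ b hb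
        _ ≤ g (φ n) x + 1/((φ n : ℝ)+1) := le_of_lt (hlt _)
    have hGWx : G W = G x := by
      have h1 : G x ≤ G W :=
        le_of_tendsto_of_tendsto' (heval x) hevalW (fun n => hgwlo _)
      have h2 : G W ≤ G x :=
        le_of_tendsto_of_tendsto' hevalW hup (fun n => hgwhi _)
      linarith
    by_cases hcase : ∃ c ∈ C, G x < G c
    · obtain ⟨c, hcC, hgt⟩ := hcase
      apply hxcl
      rw [Metric.mem_closure_iff]
      intro ε hε
      have hcx : (0:ℝ) < ‖c - x‖ + 1 := by positivity
      set s : ℝ := min 1 (ε / (‖c - x‖ + 1)) with hs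
      have hs0 : 0 < s := lt_min one_pos (by positivity)
      have hs1 : s ≤ 1 := min_le_left _ _
      refine ⟨x + s • (c - x), ⟨?_, ?_⟩, ?_⟩
      · have h := hconv hxC hcC (sub_nonneg.2 hs1) (le_of_lt hs0) (by ring)
        have he : (1 - s) • x + s • c = x + s • (c - x) := by module
        rwa [he] at h
      · intro hmem
        have := hGB _ hmem
        have hGv : G (x + s • (c - x)) = G x + s * (G c - G x) := by
          simp only [map_add, map_smul, map_sub, smul_eq_mul]; try ring
        nlinarith [mul_pos hs0 (sub_pos.2 hgt)]
      · rw [dist_eq_norm]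
        have he : x - (x + s • (c - x)) = (-s) • (c - x) := by module
        rw [he, norm_smul, Real.norm_eq_abs, abs_neg, abs_of_pos hs0]
        have h1 : s ≤ ε / (‖c - x‖ + 1) := min_le_right _ _
        have h2 : s * ‖c - x‖ ≤ ε / (‖c - x‖ + 1) * ‖c - x‖ :=
          mul_le_mul_of_nonneg_right h1 (norm_nonneg _)
        have h3 : ε / (‖c - x‖ + 1) * ‖c - x‖ < ε := by
          rw [div_mul_eq_mul_div, div_lt_iff₀ hcx]
          nlinarith [norm_nonneg (c - x)]
        linarith
    · push_neg at hcase
      have hWC : W ∈ C := hclosed.mem_of_tendsto hwφ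
        (Eventually.of_forall (fun n => hwC _))
      by_cases hWx : W = x
      · -- then Y (φ n) → x, contradicting x ∉ closure (C \ B)
        have hwφ0 : Tendsto (fun n => ‖w (φ n) - x‖) atTop (𝓝 0) := by
          have h := hwφ
          rw [hWx] at h
          have := (h.sub_const x).norm
          simpa using this
        have haφ : Tendsto (fun n => a (φ n)) atTop (𝓝 0) := by
          simp only [hwnorm] at hwφ0
          rw [Metric.tendsto_atTop] at hwφ0 ⊢
          intro ε hε
          obtain ⟨N, hN⟩ := hwφ0 (min ε 1) (lt_min hε one_pos)
          refine ⟨N, fun n hn => ?_⟩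
          have h := hN n hn
          rw [Real.dist_eq, sub_zero] at h ⊢
          rw [abs_of_nonneg (le_min (le_of_lt (hapos _)) zero_le_one)] at h
          have hlt1 : min (a (φ n)) 1 < 1 := lt_of_lt_of_le h (min_le_right _ _)
          have halt : a (φ n) < 1 := by
            rcases min_lt_iff.1 hlt1 with h' | h'
            · exact h'
            · exact absurd h' (lt_irrefl 1)
          rw [min_eq_left (le_of_lt halt)] at h
          rw [abs_of_nonneg (le_of_lt (hapos _))]
          exact lt_of_lt_of_le h (min_le_left _ _)
        have hYφ : Tendsto (fun n => Y (φ n)) atTop (𝓝 x) := by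
          rw [tendsto_iff_norm_sub_tendsto_zero]
          exact haφ
        exact hxcl (isClosed_closure.mem_of_tendsto hYφ
          (Eventually.of_forall (fun n => hYcl _)))
      · have hxW : x ≠ W := fun h => hWx h.symm
        have hmid : midpoint ℝ x W ∈ interior C := hrotund x hxC W hWC hxW
        have hGmid : G (midpoint ℝ x W) = G x := by
          rw [midpoint_eq_smul_add, invOf_eq_inv]
          simp only [map_smul, map_add, smul_eq_mul, hGWx]
          ring
        have hGne : G ≠ 0 := by
          intro h
          rw [h] at hGnorm
          simp at hGnorm
        obtain ⟨v, hv⟩ : ∃ v, G v ≠ 0 := by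
          by_contra h
          push_neg at h
          exact hGne (ContinuousLinearMap.ext fun v => by simpa using h v)
        obtain ⟨u, hu⟩ : ∃ u, 0 < G u := by
          rcases lt_or_gt_of_ne hv with h | h
          · exact ⟨-v, by simpa using h⟩
          · exact ⟨v, h⟩
        obtain ⟨ε, hε, hball⟩ := Metric.mem_nhds_iff.1
          (mem_interior_iff_mem_nhds.1 hmid)
        have hu0 : u ≠ 0 := by
          intro h; rw [h] at hu; simp at hu
        have hun : (0:ℝ) < ‖u‖ := norm_pos_iff.2 hu0
        set s : ℝ := ε / (2 * ‖u‖) with hs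
        have hs0 : 0 < s := by positivity
        have hmem2 : midpoint ℝ x W + s • u ∈ C := by
          apply hball
          rw [mem_ball, dist_eq_norm]
          have he : midpoint ℝ x W + s • u - midpoint ℝ x W = s • u := by abel
          rw [he, norm_smul, Real.norm_eq_abs, abs_of_pos hs0, hs]
          rw [div_mul_eq_mul_div]
          rw [div_lt_iff₀ (by positivity)]
          nlinarith
        have hle := hcase _ hmem2
        have hGv : G (midpoint ℝ x W + s • u) = G x + s * G u := by
          rw [map_add, map_smul, hGmid, smul_eq_mul]
        nlinarith [mul_pos hs0 hu]
  obtain ⟨δ, hδ, hkey⟩ := key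
  rw [mem_interior]
  refine ⟨Metric.ball x δ, ?_, Metric.isOpen_ball, Metric.mem_ball_self hδ⟩
  intro z hz
  simp only [eExt, Kset, Set.mem_iInter, Set.mem_setOf_eq]
  intro y hy gg hgg
  obtain ⟨h1, h2⟩ := hgg
  have hk := hkey y hy gg h1 h2
  have hzx : gg z ≤ gg x + ‖z - x‖ := by
    have h := gg.le_opNorm (z - x)
    rw [h1, one_mul] at h
    have he : gg z = gg x + gg (z - x) := by rw [map_sub]; ring
    have h' : gg (z - x) ≤ ‖z - x‖ := le_trans (le_abs_self _) h
    linarith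
  have hzb : ‖z - x‖ < δ := by
    rw [mem_ball, dist_eq_norm] at hz
    exact hz
  linarith
end

section
/- Let X be a finite-dimensional normed space of dimension ≥ 2, and let B₁ ⊆ B₂ ⊆ C be convex bodies with C containing no lines. Then e(B₁) ⊆ e(B₂). -/
/-!
Let `x ∈ e(B₁)`, `y ∈ ∂_C B₂` and let `g` support `B₂` at `y`. If `y ∈ B₁`, then `y ∈ ∂_C B₁`
and `g` supports `B₁` at `y`. Otherwise suppose `g y < g x` and perturb `g` to `h = g + ε ψ`,
where `ψ` strictly separates `y` from `B₁` and is negative on the nonzero directions of the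
asymptotic cone of `B₁`; such `ψ` exists because `B₁` contains no line, so that cone is salient.
Then `h` attains its maximum over `B₁` at some `q`, with `h q < h y` and, for small `ε`,
`h q < h x`. As `y ∈ C`, the segment from `q` to `y` leaves `B₁` inside `C`, so `q ∈ ∂_C B₁`,
and `x ∈ K(q, B₁)` contradicts `h q < h x`.
-/

open Set

section

variable {X : Type*} [NormedAddCommGroup X] [NormedSpace ℝ X]

theorem map_nonpos_of_mem_asymptoticCone {s : Set X} (hs : s.Nonempty) {f : X →L[ℝ] ℝ} {a : ℝ}
    (hf : ∀ x ∈ s, f x ≤ a) {v : X} (hv : v ∈ asymptoticCone ℝ s) : f v ≤ 0 := by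
  obtain ⟨p, hp⟩ := hs
  have hray : ∀ c : ℝ, 0 ≤ c → c * f v + f p ≤ a := fun c hc => by
    simpa using (convex_halfSpace_le f.isLinear a).smul_vadd_mem_of_isClosed_of_mem_asymptoticCone
      (isClosed_le f.continuous continuous_const) hc (asymptoticCone_mono hf hv) (hf p hp)
  by_contra! hpos
  have hfar := hray ((a - f p + 1) / f v) (div_nonneg (by linarith [hf p hp]) hpos.le)
  rw [div_mul_cancel₀ _ hpos.ne'] at hfar
  linarith

theorem exists_isMaxOn_of_neg_on_asymptoticCone [FiniteDimensional ℝ X] {s : Set X}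
    (hs : IsClosed s) (hne : s.Nonempty) {h : X →L[ℝ] ℝ}
    (hh : ∀ v ∈ asymptoticCone ℝ s, v ≠ 0 → h v < 0) : ∃ q ∈ s, IsMaxOn h s q := by
  obtain ⟨p, hp⟩ := hne
  set T := s ∩ {x | h p ≤ h x}
  have hpT : p ∈ T := ⟨hp, le_refl (h p)⟩
  have hT : IsCompact T := by
    refine Metric.isCompact_of_isClosed_isBounded (hs.inter (isClosed_le continuous_const
      h.continuous)) ?_
    by_contra hunb
    obtain ⟨v, hv0, hv⟩ := not_bounded_iff_exists_ne_zero_mem_asymptoticCone.mp hunb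
    have hv_neg : h v < 0 := hh v (asymptoticCone_mono inter_subset_left hv) hv0
    have hv_nonneg : -h v ≤ 0 := map_nonpos_of_mem_asymptoticCone (f := -h) ⟨p, hpT⟩
      (fun x hx => neg_le_neg hx.2) hv
    linarith
  obtain ⟨q, hqT, hq⟩ := hT.exists_isMaxOn ⟨p, hpT⟩ h.continuous.continuousOn
  refine ⟨q, hqT.1, fun x hx => ?_⟩
  rcases le_total (h p) (h x) with hpx | hxp
  · exact hq ⟨hx, hpx⟩
  · exact hxp.trans (hq hpT)

theorem exists_nonpos_on_cone_of_notMem {K : Set X} (hK : IsClosed K) (hconv : Convex ℝ K)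
    (hsmul : ∀ c : ℝ, 0 ≤ c → ∀ v ∈ K, c • v ∈ K) (hne : K.Nonempty) {x : X} (hx : x ∉ K) :
    ∃ f : X →L[ℝ] ℝ, (∀ v ∈ K, f v ≤ 0) ∧ 0 < f x := by
  obtain ⟨f, u, hfK, hux⟩ := geometric_hahn_banach_closed_point hconv hK hx
  obtain ⟨v₀, hv₀⟩ := hne
  have hu : 0 < u := by simpa using hfK 0 (by simpa using hsmul 0 le_rfl v₀ hv₀)
  refine ⟨f, fun v hv => ?_, hu.trans hux⟩
  by_contra! hfv
  have hlt := hfK _ (hsmul (u / f v) (div_nonneg hu.le hfv.le) v hv)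
  rw [map_smul, smul_eq_mul, div_mul_cancel₀ _ hfv.ne'] at hlt
  exact lt_irrefl u hlt

theorem exists_neg_on_salient_cone [FiniteDimensional ℝ X] {K : Set X} (hK : IsClosed K)
    (hconv : Convex ℝ K) (hsmul : ∀ c : ℝ, 0 ≤ c → ∀ v ∈ K, c • v ∈ K)
    (hsalient : ∀ v ∈ K, -v ∈ K → v = 0) :
    ∃ φ : X →L[ℝ] ℝ, ∀ v ∈ K, v ≠ 0 → φ v < 0 := by
  have hsep : ∀ k ∈ K ∩ Metric.sphere 0 1, ∃ f : X →L[ℝ] ℝ, (∀ v ∈ K, f v ≤ 0) ∧ f k < 0 := by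
    intro k ⟨hkK, hk1⟩
    have hk : -k ∉ K := fun h => ne_zero_of_mem_unit_sphere ⟨k, hk1⟩ (hsalient k hkK h)
    obtain ⟨f, hfK, hfk⟩ := exists_nonpos_on_cone_of_notMem hK hconv hsmul ⟨k, hkK⟩ hk
    exact ⟨f, hfK, by simpa using hfk⟩
  choose! f hfK hfk using hsep
  obtain ⟨t, htK, hcover⟩ := (isCompact_sphere (0 : X) 1).inter_left hK |>.elim_nhds_subcover
    (fun k => {x | f k x < 0}) fun k hk =>
      (isOpen_lt (f k).continuous continuous_const).mem_nhds (hfk k hk)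
  refine ⟨∑ k ∈ t, f k, fun v hv hv0 => ?_⟩
  have hvn : 0 < ‖v‖ := norm_pos_iff.mpr hv0
  have hu : ‖v‖⁻¹ • v ∈ K ∩ Metric.sphere 0 1 :=
    ⟨hsmul _ (inv_nonneg.mpr hvn.le) v hv, by simp [norm_smul, hvn.ne']⟩
  obtain ⟨k, hkt, hku⟩ := mem_iUnion₂.mp (hcover hu)
  have hkv : f k v < 0 := by
    have hku' : ‖v‖⁻¹ * f k v < 0 := by simpa using hku
    exact neg_of_mul_neg_right hku' (inv_nonneg.mpr hvn.le)
  simpa using Finset.sum_lt_sum (f := fun j => f j v) (g := 0)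
    (fun j hj => hfK j (htK j hj) v hv) ⟨k, hkt, hkv⟩

theorem exists_neg_on_asymptoticCone [FiniteDimensional ℝ X] {s : Set X} (hs : IsClosed s)
    (hconv : Convex ℝ s) (hne : s.Nonempty) (hnl : ¬ ∃ p v : X, v ≠ 0 ∧ ∀ t : ℝ, p + t • v ∈ s) :
    ∃ φ : X →L[ℝ] ℝ, ∀ v ∈ asymptoticCone ℝ s, v ≠ 0 → φ v < 0 := by
  refine exists_neg_on_salient_cone isClosed_asymptoticCone hconv.asymptoticCone
    (fun c hc v hv => smul_mem_asymptoticCone hc hv) fun v hv hv' => ?_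
  by_contra hv0
  obtain ⟨p, hp⟩ := hne
  refine hnl ⟨p, v, hv0, fun t => ?_⟩
  rcases le_total 0 t with ht | ht
  · simpa [add_comm] using hconv.smul_vadd_mem_of_isClosed_of_mem_asymptoticCone hs ht hv hp
  · simpa [add_comm] using
      hconv.smul_vadd_mem_of_isClosed_of_mem_asymptoticCone hs (neg_nonneg.mpr ht) hv' hp

theorem exists_neg_on_asymptoticCone_of_notMem [FiniteDimensional ℝ X] {s : Set X}
    (hs : IsClosed s) (hconv : Convex ℝ s) (hne : s.Nonempty)
    (hnl : ¬ ∃ p v : X, v ≠ 0 ∧ ∀ t : ℝ, p + t • v ∈ s) {y : X} (hy : y ∉ s) :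
    ∃ ψ : X →L[ℝ] ℝ, (∀ v ∈ asymptoticCone ℝ s, v ≠ 0 → ψ v < 0) ∧ ∀ z ∈ s, ψ z < ψ y := by
  obtain ⟨φ, hφ⟩ := exists_neg_on_asymptoticCone hs hconv hne hnl
  obtain ⟨q, hqs, hq⟩ := exists_isMaxOn_of_neg_on_asymptoticCone hs hne hφ
  obtain ⟨f, u, hfs, hfy⟩ : ∃ (f : X →L[ℝ] ℝ) (u : ℝ), (∀ z ∈ s, f z < u) ∧ u < f y :=
    geometric_hahn_banach_closed_point hconv hs hy
  set l := max 1 ((φ q - φ y) / (f y - u))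
  have hl : 0 < l := lt_max_of_lt_left one_pos
  have hly : φ q - φ y ≤ l * f y - l * u := by
    rw [← mul_sub]; exact (div_le_iff₀ (sub_pos.mpr hfy)).mp (le_max_right _ _)
  have happ : ∀ w, (φ + l • f) w = φ w + l * f w := fun w => rfl
  refine ⟨φ + l • f, fun v hv hv0 => ?_, fun z hz => ?_⟩
  · have hfv : f v ≤ 0 := map_nonpos_of_mem_asymptoticCone hne (fun z hz => (hfs z hz).le) hv
    rw [happ]
    nlinarith [hφ v hv hv0]
  · have hfz : l * f z < l * u := mul_lt_mul_of_pos_left (hfs z hz) hl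
    have hzq : φ z ≤ φ q := hq hz
    rw [happ, happ]
    linarith

theorem exists_isMaxOn_lt_of_notMem [FiniteDimensional ℝ X] {s : Set X} (hs : IsClosed s)
    (hconv : Convex ℝ s) (hne : s.Nonempty) (hnl : ¬ ∃ p v : X, v ≠ 0 ∧ ∀ t : ℝ, p + t • v ∈ s)
    {g : X →L[ℝ] ℝ} {x y : X} (hy : y ∉ s) (hgy : ∀ z ∈ s, g z ≤ g y) (hyx : g y < g x) :
    ∃ h : X →L[ℝ] ℝ, ∃ q ∈ s, IsMaxOn h s q ∧ h q < h y ∧ h q < h x := by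
  obtain ⟨ψ, hψ, hψy⟩ := exists_neg_on_asymptoticCone_of_notMem hs hconv hne hnl hy
  set ε := (g x - g y) / (|ψ y - ψ x| + 1)
  have hε : 0 < ε := div_pos (sub_pos.mpr hyx) (by positivity)
  have hεx : ε * (ψ y - ψ x) < g x - g y := by
    calc ε * (ψ y - ψ x) < ε * (|ψ y - ψ x| + 1) :=
          mul_lt_mul_of_pos_left ((le_abs_self _).trans_lt (lt_add_one _)) hε
      _ = g x - g y := div_mul_cancel₀ _ (by positivity)
  have happ : ∀ w, (g + ε • ψ) w = g w + ε * ψ w := fun w => rfl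
  have hneg : ∀ v ∈ asymptoticCone ℝ s, v ≠ 0 → (g + ε • ψ) v < 0 := fun v hv hv0 => by
    have hgv : g v ≤ 0 := map_nonpos_of_mem_asymptoticCone hne hgy hv
    rw [happ]
    nlinarith [hψ v hv hv0]
  obtain ⟨q, hqs, hq⟩ := exists_isMaxOn_of_neg_on_asymptoticCone hs hne hneg
  have hεq : ε * ψ q < ε * ψ y := mul_lt_mul_of_pos_left (hψy q hqs) hε
  refine ⟨g + ε • ψ, q, hqs, hq, ?_, ?_⟩ <;> rw [happ, happ] <;> linarith [hgy q hqs]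

theorem mem_relBdry_of_isMaxOn {C B : Set X} (hC : Convex ℝ C) (hBC : B ⊆ C)
    {h : X →L[ℝ] ℝ} {q c : X} (hq : q ∈ B) (hmax : IsMaxOn h B q) (hc : c ∈ C)
    (hqc : h q < h c) : q ∈ relBdry C B := by
  refine ⟨⟨hBC hq, subset_closure hq⟩, closure_mono ?_
    (segment_subset_closure_openSegment (left_mem_segment ℝ q c))⟩
  rintro z hz
  refine ⟨hC.openSegment_subset (hBC hq) hc hz, fun hzB => ?_⟩
  obtain ⟨a, b, ha, hb, hab, rfl⟩ := hz
  have hle : h (a • q + b • c) ≤ h q := hmax hzB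
  have hsplit : h (a • q + b • c) = h q + b * (h c - h q) := by
    simp only [map_add, map_smul, smul_eq_mul]
    linear_combination h q * hab
  linarith [mul_pos hb (sub_pos.mpr hqc)]

theorem le_of_mem_eExt_of_isMaxOn {C B : Set X} {x q : X} (hx : x ∈ eExt C B)
    (hq : q ∈ relBdry C B) {h : X →L[ℝ] ℝ} (hmax : IsMaxOn h B q) : h x ≤ h q := by
  rcases eq_or_ne h 0 with rfl | h0
  · simp
  have hh : 0 < ‖h‖⁻¹ := inv_pos.mpr (norm_pos_iff.mpr h0)
  have hunit : ‖‖h‖⁻¹ • h‖ = 1 := by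
    rw [norm_smul, norm_inv, norm_norm, inv_mul_cancel₀ (norm_ne_zero_iff.mpr h0)]
  have hxq : ‖h‖⁻¹ * h x ≤ ‖h‖⁻¹ * h q := mem_iInter₂.mp (mem_iInter₂.mp hx q hq) (‖h‖⁻¹ • h)
    ⟨hunit, fun z hz => mul_le_mul_of_nonneg_left (hmax hz) hh.le⟩
  exact le_of_mul_le_mul_left hxq hh

end

theorem stmt_15_general {X : Type*} [NormedAddCommGroup X] [NormedSpace ℝ X]
    [FiniteDimensional ℝ X]
    (C : Set X) (hconv : Convex ℝ C)
    (hnoline : ¬ ∃ (p v : X), v ≠ 0 ∧ ∀ t : ℝ, p + t • v ∈ C)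
    (B₁ B₂ : Set X)
    (hB₁ : IsClosed B₁ ∧ Convex ℝ B₁ ∧ (interior B₁).Nonempty ∧ B₁ ≠ Set.univ)
    (h12 : B₁ ⊆ B₂) (h2C : B₂ ⊆ C) :
    eExt C B₁ ⊆ eExt C B₂ := by
  obtain ⟨hB₁cl, hB₁conv, hB₁int, -⟩ := hB₁
  have hnoline₁ : ¬ ∃ p v : X, v ≠ 0 ∧ ∀ t : ℝ, p + t • v ∈ B₁ := fun ⟨p, v, hv, hline⟩ =>
    hnoline ⟨p, v, hv, fun t => h2C (h12 (hline t))⟩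
  intro x hx
  refine mem_iInter₂.mpr fun y hy => mem_iInter₂.mpr fun g ⟨_, hgy⟩ => ?_
  obtain ⟨⟨hyC, -⟩, hy_closure⟩ := hy
  have hgy₁ : ∀ z ∈ B₁, g z ≤ g y := fun z hz => hgy z (h12 hz)
  by_cases hyB₁ : y ∈ B₁
  · exact le_of_mem_eExt_of_isMaxOn hx
      ⟨⟨hyC, subset_closure hyB₁⟩, closure_mono (sdiff_subset_sdiff_right h12) hy_closure⟩ hgy₁
  change g x ≤ g y
  by_contra! hxy
  obtain ⟨h, q, hqB, hq, hqy, hqx⟩ := exists_isMaxOn_lt_of_notMem hB₁cl hB₁conv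
    (hB₁int.mono interior_subset) hnoline₁ hyB₁ hgy₁ hxy
  have hqB₁ : q ∈ relBdry C B₁ := mem_relBdry_of_isMaxOn hconv (h12.trans h2C) hqB hq hyC hqy
  exact (le_of_mem_eExt_of_isMaxOn hx hqB₁ hq).not_gt hqx

theorem stmt_15 {X : Type*} [NormedAddCommGroup X] [NormedSpace ℝ X]
    [FiniteDimensional ℝ X] (hd : 2 ≤ Module.finrank ℝ X)
    (C : Set X) (hclosed : IsClosed C) (hconv : Convex ℝ C) (hne : C ≠ Set.univ)
    (hint : (interior C).Nonempty)
    (hnoline : ¬ ∃ (p v : X), v ≠ 0 ∧ ∀ t : ℝ, p + t • v ∈ C)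
    (B₁ B₂ : Set X)
    (hB₁ : IsClosed B₁ ∧ Convex ℝ B₁ ∧ (interior B₁).Nonempty ∧ B₁ ≠ Set.univ)
    (hB₂ : IsClosed B₂ ∧ Convex ℝ B₂ ∧ (interior B₂).Nonempty ∧ B₂ ≠ Set.univ)
    (h12 : B₁ ⊆ B₂) (h2C : B₂ ⊆ C) :
    eExt C B₁ ⊆ eExt C B₂ :=
  stmt_15_general C hconv hnoline B₁ B₂ hB₁ h12 h2C
end

section
/- Let X be a finite-dimensional normed space of dimension ≥ 2 and C ⊆ X a convex body with no asymptotic directions. If {B_n} is a decreasing sequence of convex bodies contained in C with ⋂_n B_n = ∅, then ⋂_n e(B_n) = ∅. -/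
/-!
Suppose `x` lies in every `e(B n)` and pick `N` with `x ∉ B N`. For `n ≥ N` let `y n` be the last
point of `B n` on the segment from an interior point `b` of `B n` to `x`. A norm-one functional
supporting `B n` at `y n` separates `b` from `x`, so `x ∈ e(B n)` forces `y n` off the relative
boundary: near `y n` the set `C` coincides with `B n`, and by convexity the half-open segment
`[x, y n)` misses `C`. As `⋂ B n = ∅`, `y n → ∞`. A limit `u` of the directions of `y n - x` is a
recession direction of `C`, and the ray from `x` along `u` avoids `interior C`. A point `d`
closest to `x` in the closure of `⋃ t ≥ 0, (C - t • u)` then starts a ray along `u` that still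
avoids `interior C` but whose distance to `C` tends to `0`, so `u` is an asymptotic direction.
-/

open Filter Metric Set Topology

section

variable {X : Type*} [NormedAddCommGroup X] [NormedSpace ℝ X]

lemma eventually_add_smul_mem {U : Set X} {y : X} (hU : U ∈ 𝓝 y) (v : X) :
    ∀ᶠ σ in 𝓝[>] (0 : ℝ), y + σ • v ∈ U := by
  have hcont : Tendsto (fun σ : ℝ => y + σ • v) (𝓝 0) (𝓝 y) := by
    simpa using ((continuous_id.smul continuous_const).const_add y).tendsto (0 : ℝ)
  exact (hcont.mono_left nhdsWithin_le_nhds).eventually hU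

lemma exists_last_mem_segment {B : Set X} {b x : X} (hB : IsClosed B) (hb : b ∈ B)
    (hx : x ∉ B) :
    ∃ y ∈ B, (∃ l ∈ Ico (0 : ℝ) 1, y = b + l • (x - b)) ∧
      ∀ σ ∈ Ioc (0 : ℝ) 1, y + σ • (x - y) ∉ B := by
  set S : Set ℝ := Icc 0 1 ∩ (fun l : ℝ => b + l • (x - b)) ⁻¹' B
  have hS : IsCompact S := isCompact_Icc.inter_right <|
    hB.preimage (continuous_const.add (continuous_id.smul continuous_const))
  have hS0 : (0 : ℝ) ∈ S := ⟨left_mem_Icc.2 zero_le_one, by simpa using hb⟩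
  obtain ⟨⟨hl0, hle1⟩, hlB⟩ := hS.sSup_mem ⟨0, hS0⟩
  set l := sSup S
  have hl1 : l < 1 := hle1.lt_of_ne fun h => hx (by simpa [h] using hlB)
  refine ⟨_, hlB, ⟨l, ⟨hl0, hl1⟩, rfl⟩, fun σ ⟨hσ0, hσ1⟩ hσB => ?_⟩
  have hmem : l + σ * (1 - l) ∈ S := by
    refine ⟨⟨by nlinarith, by nlinarith⟩, ?_⟩
    show b + (l + σ * (1 - l)) • (x - b) ∈ B
    convert hσB using 1
    module
  have := le_csSup hS.bddAbove hmem
  nlinarith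

lemma exists_supporting_functional_norm_eq_one {B : Set X} {b y : X} (hB : Convex ℝ B)
    (hb : b ∈ interior B) (hy : y ∉ interior B) :
    ∃ g : X →L[ℝ] ℝ, ‖g‖ = 1 ∧ (∀ z ∈ B, g z ≤ g y) ∧ g b < g y := by
  obtain ⟨f, hf⟩ := geometric_hahn_banach_open_point hB.interior isOpen_interior hy
  have hfb := hf b hb
  have hf0 : f ≠ 0 := by rintro rfl; simp at hfb
  have hfB : ∀ z ∈ B, f z ≤ f y := by
    have : closure (interior B) ⊆ {z | f z ≤ f y} :=
      closure_minimal (fun z hz => (hf z hz).le) (isClosed_le f.continuous continuous_const)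
    rw [hB.closure_interior_eq_closure_of_nonempty_interior ⟨b, hb⟩] at this
    exact fun z hz => this (subset_closure hz)
  have hpos : 0 < ‖f‖⁻¹ := inv_pos.2 (norm_pos_iff.2 hf0)
  refine ⟨‖f‖⁻¹ • f, by simpa using norm_smul_inv_norm (𝕜 := ℝ) hf0, fun z hz => ?_, ?_⟩
  · simpa using mul_le_mul_of_nonneg_left (hfB z hz) hpos.le
  · simpa using mul_lt_mul_of_pos_left hfb hpos

lemma exists_segment_notMem_of_mem_eExt {C B : Set X} {b x : X} (hC : Convex ℝ C)
    (hBcl : IsClosed B) (hBconv : Convex ℝ B) (hBC : B ⊆ C) (hb : b ∈ interior B)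
    (hx : x ∈ eExt C B) (hxB : x ∉ B) :
    ∃ y ∈ B, ∀ s ∈ Ico (0 : ℝ) 1, x + s • (y - x) ∉ C := by
  obtain ⟨y, hyB, ⟨l, ⟨hl0, hl1⟩, hy⟩, hbeyond⟩ :=
    exists_last_mem_segment hBcl (interior_subset hb) hxB
  have hyint : y ∉ interior B := fun hyint => by
    obtain ⟨σ, hσB, hσ⟩ :=
      ((eventually_add_smul_mem (isOpen_interior.mem_nhds hyint) (x - y)).and
        (Ioc_mem_nhdsGT one_pos)).exists
    exact hbeyond σ hσ (interior_subset hσB)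
  have hyrel : y ∉ closure (C \ B) := fun hyrel => by
    obtain ⟨g, hg1, hgB, hgb⟩ := exists_supporting_functional_norm_eq_one hBconv hb hyint
    have hgx : g x ≤ g y :=
      mem_iInter₂.1 (mem_iInter₂.1 hx y ⟨⟨hBC hyB, subset_closure hyB⟩, hyrel⟩) g ⟨hg1, hgB⟩
    -- `g y` is a proper convex combination of `g b < g y` and `g x ≤ g y`.
    have hgy : g y = g b + l * (g x - g b) := by simp [hy]
    nlinarith
  refine ⟨y, hyB, fun s ⟨hs0, hs1⟩ hsC => ?_⟩
  obtain ⟨σ, hσU, hσ0, hσ1⟩ :=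
    ((eventually_add_smul_mem (isClosed_closure.isOpen_compl.mem_nhds hyrel)
      (x + s • (y - x) - y)).and (Ioc_mem_nhdsGT one_pos)).exists
  have hσC : y + σ • (x + s • (y - x) - y) ∈ C := hC.add_smul_sub_mem (hBC hyB) hsC ⟨hσ0.le, hσ1⟩
  have hσB : y + σ • (x + s • (y - x) - y) ∈ B := by
    by_contra h
    exact hσU (subset_closure ⟨hσC, h⟩)
  refine hbeyond (σ * (1 - s)) ⟨by nlinarith, by nlinarith⟩ ?_
  convert hσB using 1
  module

lemma add_notMem_interior_of_norm_le_infDist {C : Set X} {p w : X} (hp : p ∉ interior C)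
    (hw : ‖w‖ ≤ infDist p C) : p + w ∉ interior C := by
  intro hpw
  rcases eq_or_ne w 0 with rfl | hw0
  · simp_all
  obtain ⟨σ, hσC, hσ0, hσ1⟩ :=
    ((eventually_add_smul_mem (isOpen_interior.mem_nhds hpw) (-w)).and
      (Ioo_mem_nhdsGT one_pos)).exists
  have hdist : dist p (p + w + σ • -w) = (1 - σ) * ‖w‖ := by
    rw [dist_eq_norm, show p - (p + w + σ • -w) = (σ - 1) • w by module, norm_smul,
      Real.norm_eq_abs, abs_of_neg (by linarith), neg_sub]
  have := infDist_le_dist_of_mem (x := p) (interior_subset hσC)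
  nlinarith [norm_pos_iff.2 hw0]

lemma isAsymptoticDir_of_forall_add_smul_mem_s16 [ProperSpace X] {C : Set X} {u x : X} (hu : u ≠ 0)
    (hrec : ∀ c ∈ C, ∀ t : ℝ, 0 ≤ t → c + t • u ∈ C)
    (hx : ∀ t : ℝ, 0 ≤ t → x + t • u ∉ interior C) : IsAsymptoticDir C u := by
  rcases C.eq_empty_or_nonempty with rfl | hC
  · exact ⟨hu, x, by simp, by simp⟩
  set D := closure {z : X | ∃ t : ℝ, 0 ≤ t ∧ z + t • u ∈ C}
  obtain ⟨c, hc⟩ := hC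
  have hD : D.Nonempty := ⟨c, subset_closure ⟨0, le_rfl, by simpa using hc⟩⟩
  obtain ⟨d, hdD, hxd⟩ := isClosed_closure.exists_infDist_eq_dist hD x
  refine ⟨hu, d, fun t ht => ?_, ?_⟩
  · have hle : ‖d - x‖ ≤ infDist (x + t • u) C := by
      rw [← dist_eq_norm, dist_comm, ← hxd]
      refine (le_infDist ⟨c, hc⟩).2 fun c' hc' => ?_
      calc infDist x D ≤ dist x (c' - t • u) :=
            infDist_le_dist_of_mem (subset_closure ⟨t, ht, by simpa using hc'⟩)
        _ = dist (x + t • u) c' := by rw [dist_eq_norm, dist_eq_norm]; congr 1; abel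
    convert add_notMem_interior_of_norm_le_infDist (hx t ht) hle using 2
    abel
  · refine Metric.tendsto_atTop.2 fun ε hε => ?_
    obtain ⟨z, ⟨t₀, ht₀, hz⟩, hdz⟩ := mem_closure_iff.1 hdD ε hε
    refine ⟨t₀, fun t ht => ?_⟩
    have hmem : z + t₀ • u + (t - t₀) • u ∈ C := hrec _ hz _ (by linarith)
    calc dist (infDist (d + t • u) C) 0 = infDist (d + t • u) C := by
          rw [Real.dist_0_eq_abs, abs_of_nonneg infDist_nonneg]
      _ ≤ dist (d + t • u) (z + t₀ • u + (t - t₀) • u) := infDist_le_dist_of_mem hmem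
      _ = dist d z := by rw [dist_eq_norm, dist_eq_norm]; congr 1; module
      _ < ε := hdz

section LimitDirection

variable {ι : Type*} {l : Filter ι} [l.NeBot] {y : ι → X} {x u : X}

lemma add_smul_mem_of_tendsto_dir {C : Set X} (hCcl : IsClosed C) (hCconv : Convex ℝ C)
    (hyC : ∀ i, y i ∈ C) (hfar : Tendsto (fun i => ‖y i - x‖) l atTop)
    (hdir : Tendsto (fun i => ‖y i - x‖⁻¹ • (y i - x)) l (𝓝 u))
    {c : X} (hc : c ∈ C) {t : ℝ} (ht : 0 ≤ t) : c + t • u ∈ C := by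
  have hscale : Tendsto (fun i => t / ‖y i - x‖) l (𝓝 0) := tendsto_const_nhds.div_atTop hfar
  have hlim : Tendsto (fun i => c + (t / ‖y i - x‖) • (y i - c)) l (𝓝 (c + t • u)) := by
    have := ((hdir.const_smul t).const_add c).add (hscale.smul_const (x - c))
    rw [zero_smul, add_zero] at this
    refine this.congr fun i => ?_
    rw [div_eq_mul_inv, mul_smul, mul_smul]
    module
  refine hCcl.mem_of_tendsto hlim ?_
  filter_upwards [hfar.eventually_ge_atTop t, hfar.eventually_gt_atTop 0] with i hit hi
  exact hCconv.add_smul_sub_mem hc (hyC i) ⟨by positivity, (div_le_one hi).2 hit⟩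

lemma add_smul_notMem_interior_of_tendsto_dir {C : Set X}
    (hseg : ∀ i, ∀ s ∈ Ico (0 : ℝ) 1, x + s • (y i - x) ∉ C)
    (hfar : Tendsto (fun i => ‖y i - x‖) l atTop)
    (hdir : Tendsto (fun i => ‖y i - x‖⁻¹ • (y i - x)) l (𝓝 u))
    {t : ℝ} (ht : 0 ≤ t) : x + t • u ∉ interior C := fun hint => by
  have hlim : Tendsto (fun i => x + (t / ‖y i - x‖) • (y i - x)) l (𝓝 (x + t • u)) := by
    refine ((hdir.const_smul t).const_add x).congr fun i => ?_
    rw [div_eq_mul_inv, mul_smul]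
  obtain ⟨i, hiC, hit, hi⟩ := ((hlim.eventually (isOpen_interior.mem_nhds hint)).and
    ((hfar.eventually_gt_atTop t).and (hfar.eventually_gt_atTop 0))).exists
  exact hseg i _ ⟨by positivity, (div_lt_one hi).2 hit⟩ (interior_subset hiC)

end LimitDirection

lemma exists_isAsymptoticDir [ProperSpace X] {C : Set X} (hCcl : IsClosed C)
    (hCconv : Convex ℝ C) {y : ℕ → X} {x : X} (hyC : ∀ n, y n ∈ C)
    (hseg : ∀ n, ∀ s ∈ Ico (0 : ℝ) 1, x + s • (y n - x) ∉ C)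
    (hfar : Tendsto (fun n => ‖y n - x‖) atTop atTop) : ∃ u, IsAsymptoticDir C u := by
  have hyx : ∀ n, y n - x ≠ 0 := fun n h => hseg n 0 ⟨le_rfl, one_pos⟩ <| by
    simpa [sub_eq_zero.1 h] using hyC n
  obtain ⟨u, hu, φ, hφ, hdir⟩ := (isCompact_sphere (0 : X) 1).tendsto_subseq
    (x := fun n => ‖y n - x‖⁻¹ • (y n - x)) fun n => by simp [norm_smul, hyx n]
  have hfarφ := hfar.comp hφ.tendsto_atTop
  exact ⟨u, isAsymptoticDir_of_forall_add_smul_mem_s16 (ne_zero_of_mem_unit_sphere ⟨u, hu⟩)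
    (fun c hc t ht => add_smul_mem_of_tendsto_dir hCcl hCconv (fun n => hyC (φ n)) hfarφ hdir hc ht)
    (fun t ht => add_smul_notMem_interior_of_tendsto_dir (fun n => hseg (φ n)) hfarφ hdir ht)⟩

end

lemma tendsto_cocompact_of_forall_eventually_mem {X ι : Type*} [TopologicalSpace X] {l : Filter ι}
    {B : ℕ → Set X} (hBcl : ∀ n, IsClosed (B n)) (hanti : Antitone B) (hempty : ⋂ n, B n = ∅)
    {y : ι → X} (hy : ∀ n, ∀ᶠ i in l, y i ∈ B n) : Tendsto y l (cocompact X) := by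
  refine hasBasis_cocompact.tendsto_right_iff.2 fun K hK => ?_
  obtain ⟨n, hn⟩ := hK.elim_directed_family_closed B hBcl (by simp [hempty]) hanti.directed_ge
  filter_upwards [hy n] with i hi hiK
  exact hn.subset ⟨hiK, hi⟩

theorem stmt_16_general {X : Type*} [NormedAddCommGroup X] [NormedSpace ℝ X]
    [FiniteDimensional ℝ X]
    (C : Set X) (hclosed : IsClosed C) (hconv : Convex ℝ C)
    (hnoasym : ∀ v : X, ¬ IsAsymptoticDir C v)
    (B : ℕ → Set X)
    (hB : ∀ n, IsClosed (B n) ∧ Convex ℝ (B n) ∧ B n ≠ Set.univ ∧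
      (interior (B n)).Nonempty ∧ B n ⊆ C)
    (hmono : ∀ n, B (n + 1) ⊆ B n)
    (hempty : ⋂ n, B n = ∅) :
    ⋂ n, eExt C (B n) = ∅ := by
  refine eq_empty_of_forall_notMem fun x hx => ?_
  have hanti : Antitone B := antitone_nat_of_succ_le hmono
  obtain ⟨N, hxN⟩ : ∃ N, x ∉ B N := by
    by_contra! h
    simpa [hempty] using mem_iInter.2 h
  have hseg : ∀ n, ∃ y ∈ B (n + N), ∀ s ∈ Ico (0 : ℝ) 1, x + s • (y - x) ∉ C := fun n => by
    obtain ⟨hBcl, hBconv, -, ⟨b, hb⟩, hBC⟩ := hB (n + N)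
    exact exists_segment_notMem_of_mem_eExt hconv hBcl hBconv hBC hb (mem_iInter.1 hx _)
      fun h => hxN (hanti (Nat.le_add_left N n) h)
  choose y hyB hyseg using hseg
  have hycocompact : Tendsto y atTop (cocompact X) :=
    tendsto_cocompact_of_forall_eventually_mem (fun n => (hB n).1) hanti hempty fun m => by
      filter_upwards [eventually_ge_atTop m] with n hn using hanti (by omega) (hyB n)
  have hfar : Tendsto (fun n => ‖y n - x‖) atTop atTop := by
    simpa only [Function.comp_def, dist_eq_norm] using
      (tendsto_dist_right_cocompact_atTop x).comp hycocompact
  obtain ⟨u, hu⟩ :=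
    exists_isAsymptoticDir hclosed hconv (fun n => (hB _).2.2.2.2 (hyB n)) hyseg hfar
  exact hnoasym u hu

theorem stmt_16 {X : Type*} [NormedAddCommGroup X] [NormedSpace ℝ X]
    [FiniteDimensional ℝ X] (hd : 2 ≤ Module.finrank ℝ X)
    (C : Set X) (hclosed : IsClosed C) (hconv : Convex ℝ C) (hne : C ≠ Set.univ)
    (hint : (interior C).Nonempty)
    (hnoasym : ∀ v : X, ¬ IsAsymptoticDir C v)
    (B : ℕ → Set X)
    (hB : ∀ n, IsClosed (B n) ∧ Convex ℝ (B n) ∧ B n ≠ Set.univ ∧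
      (interior (B n)).Nonempty ∧ B n ⊆ C)
    (hmono : ∀ n, B (n + 1) ⊆ B n)
    (hempty : ⋂ n, B n = ∅) :
    ⋂ n, eExt C (B n) = ∅ :=
  stmt_16_general C hclosed hconv hnoasym B hB hmono hempty
end

section
/- Let C = [0,1] × [−1,1] ⊆ ℝ². Define f : C → ℝ by f(x,y) = 0 if y < 0; f(x,y) = y if 0 < x < 1 and 0 ≤ y ≤ 1; and f(x,y) = 1 otherwise. Then f is quasiconvex and upper semicontinuous on C, but there is no quasiconvex upper semicontinuous function F : ℝ² → ℝ with F restricted to C equal to f. -/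
noncomputable def fPaper : ℝ × ℝ → ℝ := fun p =>
  if p.2 < 0 then 0
  else if 0 < p.1 ∧ p.1 < 1 then p.2
  else 1

open Set Filter Topology

lemma fPaper_nonneg (p : ℝ × ℝ) : 0 ≤ fPaper p := by
  unfold fPaper
  split_ifs with h1 h2
  · exact le_refl 0
  · exact not_lt.1 h1
  · norm_num

lemma fPaper_sublevel {p : ℝ × ℝ} {r : ℝ} (hr : r < 1) (h : fPaper p ≤ r) :
    p.2 < 0 ∨ (0 < p.1 ∧ p.1 < 1 ∧ p.2 ≤ r) := by
  unfold fPaper at h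
  split_ifs at h with h1 h2
  · exact Or.inl h1
  · exact Or.inr ⟨h2.1, h2.2, h⟩
  · linarith

lemma fPaper_qc : QuasiconvexOn ℝ (Set.Icc (0:ℝ) 1 ×ˢ Set.Icc (-1:ℝ) 1) fPaper := by
  intro r p hp q hq a b ha hb hab
  obtain ⟨hpC, hpr⟩ := hp
  obtain ⟨hqC, hqr⟩ := hq
  rcases ha.eq_or_lt with rfl | ha'
  · obtain rfl : b = 1 := by linarith
    simp only [zero_smul, zero_add, one_smul]
    exact ⟨hqC, hqr⟩
  rcases hb.eq_or_lt with rfl | hb'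
  · obtain rfl : a = 1 := by linarith
    simp only [zero_smul, add_zero, one_smul]
    exact ⟨hpC, hpr⟩
  have hr0 : 0 ≤ r := le_trans (fPaper_nonneg p) hpr
  simp only [Set.mem_prod, Set.mem_Icc] at hpC hqC
  obtain ⟨⟨hp1l, hp1u⟩, hp2l, hp2u⟩ := hpC
  obtain ⟨⟨hq1l, hq1u⟩, hq2l, hq2u⟩ := hqC
  constructor
  · simp only [Set.mem_prod, Set.mem_Icc, Prod.fst_add, Prod.snd_add, Prod.smul_fst,
      Prod.smul_snd, smul_eq_mul]
    refine ⟨⟨by positivity, ?_⟩, ?_, ?_⟩ <;>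
      nlinarith [mul_le_mul_of_nonneg_left hp1u ha, mul_le_mul_of_nonneg_left hq1u hb,
        mul_le_mul_of_nonneg_left hp2u ha, mul_le_mul_of_nonneg_left hq2u hb,
        mul_le_mul_of_nonneg_left hp2l ha, mul_le_mul_of_nonneg_left hq2l hb]
  · show fPaper (a • p + b • q) ≤ r
    by_cases hr1 : 1 ≤ r
    · -- everything on C is ≤ 1 ≤ r
      unfold fPaper
      simp only [Prod.snd_add, Prod.smul_snd, smul_eq_mul, Prod.fst_add, Prod.smul_fst]
      split_ifs with h1 h2
      · exact hr0
      · nlinarith [mul_le_mul_of_nonneg_left hp2u ha, mul_le_mul_of_nonneg_left hq2u hb]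
      · exact hr1
    push_neg at hr1
    have hp' := fPaper_sublevel hr1 hpr
    have hq' := fPaper_sublevel hr1 hqr
    have hp2r : p.2 ≤ r := by
      rcases hp' with h | h
      · linarith
      · exact h.2.2
    have hq2r : q.2 ≤ r := by
      rcases hq' with h | h
      · linarith
      · exact h.2.2
    unfold fPaper
    simp only [Prod.snd_add, Prod.smul_snd, smul_eq_mul, Prod.fst_add, Prod.smul_fst]
    split_ifs with h1 h2
    · exact hr0
    · nlinarith [mul_le_mul_of_nonneg_left hp2r ha, mul_le_mul_of_nonneg_left hq2r hb]
    · -- derive a contradiction: this case cannot happen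
      exfalso
      push_neg at h1
      rcases hp' with hpneg | ⟨hpa, hpb, _⟩
      · rcases hq' with hqneg | ⟨hqa, hqb, _⟩
        · nlinarith [mul_pos ha' (neg_pos.2 hpneg), mul_pos hb' (neg_pos.2 hqneg)]
        · refine h2 ⟨?_, ?_⟩
          · nlinarith [mul_pos hb' hqa]
          · nlinarith [mul_lt_mul_of_pos_left hqb hb', mul_le_mul_of_nonneg_left hp1u ha]
      · refine h2 ⟨?_, ?_⟩
        · nlinarith [mul_pos ha' hpa]
        · nlinarith [mul_lt_mul_of_pos_left hpb ha', mul_le_mul_of_nonneg_left hq1u hb]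

lemma fPaper_usc :
    UpperSemicontinuousOn fPaper (Set.Icc (0:ℝ) 1 ×ˢ Set.Icc (-1:ℝ) 1) := by
  rintro p hp y hy
  simp only [Set.mem_prod, Set.mem_Icc] at hp
  obtain ⟨⟨hp1l, hp1u⟩, hp2l, hp2u⟩ := hp
  by_cases h1 : p.2 < 0
  · have h0y : (0:ℝ) < y := by simpa [fPaper, h1] using hy
    have hev : ∀ᶠ q : ℝ × ℝ in 𝓝 p, q.2 < 0 :=
      (isOpen_lt continuous_snd continuous_const).eventually_mem h1
    refine Filter.Eventually.filter_mono nhdsWithin_le_nhds ?_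
    filter_upwards [hev] with q hq
    simpa [fPaper, hq] using h0y
  · push_neg at h1
    by_cases h2 : 0 < p.1 ∧ p.1 < 1
    · have hpy : p.2 < y := by simpa [fPaper, not_lt.2 h1, h2] using hy
      have e1 : ∀ᶠ q : ℝ × ℝ in 𝓝 p, 0 < q.1 :=
        (isOpen_lt continuous_const continuous_fst).eventually_mem h2.1
      have e2 : ∀ᶠ q : ℝ × ℝ in 𝓝 p, q.1 < 1 :=
        (isOpen_lt continuous_fst continuous_const).eventually_mem h2.2
      have e3 : ∀ᶠ q : ℝ × ℝ in 𝓝 p, q.2 < y :=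
        (isOpen_lt continuous_snd continuous_const).eventually_mem hpy
      refine Filter.Eventually.filter_mono nhdsWithin_le_nhds ?_
      filter_upwards [e1, e2, e3] with q hq1 hq2 hq3
      by_cases hqneg : q.2 < 0
      · simp only [fPaper, if_pos hqneg]; linarith
      · simp only [fPaper, if_neg hqneg, if_pos (⟨hq1, hq2⟩ : 0 < q.1 ∧ q.1 < 1)]
        exact hq3
    · have h1y : (1:ℝ) < y := by simpa [fPaper, not_lt.2 h1, h2] using hy
      filter_upwards [self_mem_nhdsWithin] with q hq
      simp only [Set.mem_prod, Set.mem_Icc] at hq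
      unfold fPaper
      split_ifs <;> linarith [hq.2.2]

theorem stmt_18 :
    QuasiconvexOn ℝ (Set.Icc (0:ℝ) 1 ×ˢ Set.Icc (-1:ℝ) 1) fPaper ∧
    UpperSemicontinuousOn fPaper (Set.Icc (0:ℝ) 1 ×ˢ Set.Icc (-1:ℝ) 1) ∧
    ¬ ∃ F : ℝ × ℝ → ℝ, QuasiconvexOn ℝ Set.univ F ∧ UpperSemicontinuous F ∧
        Set.EqOn F fPaper (Set.Icc (0:ℝ) 1 ×ˢ Set.Icc (-1:ℝ) 1) := by
  refine ⟨fPaper_qc, fPaper_usc, ?_⟩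
  rintro ⟨F, hqc, husc, heq⟩
  set S : Set (ℝ × ℝ) := F ⁻¹' Set.Iio 1 with hSdef
  have hSopen : IsOpen S := husc.isOpen_preimage 1
  have hSconv : Convex ℝ S := by
    intro x hx y hy a b ha hb hab
    have h := hqc (max (F x) (F y)) ⟨Set.mem_univ x, le_max_left _ _⟩
      ⟨Set.mem_univ y, le_max_right _ _⟩ ha hb hab
    exact lt_of_le_of_lt h.2 (max_lt hx hy)
  have hA : ((0:ℝ), (-1/2:ℝ)) ∈ S := by
    have hmem : ((0:ℝ), (-1/2:ℝ)) ∈ Set.Icc (0:ℝ) 1 ×ˢ Set.Icc (-1:ℝ) 1 := by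
      simp only [Set.mem_prod, Set.mem_Icc]; norm_num
    have : F (0, -1/2) = fPaper (0, -1/2) := heq hmem
    simp only [hSdef, Set.mem_preimage, Set.mem_Iio, this, fPaper]
    norm_num
  have hB : ((0:ℝ), (1/2:ℝ)) ∈ closure S := by
    have htend : Tendsto (fun n : ℕ => (((n:ℝ) + 2)⁻¹, (1/2:ℝ))) atTop
        (𝓝 ((0:ℝ), (1/2:ℝ))) := by
      refine Filter.Tendsto.prodMk_nhds ?_ tendsto_const_nhds
      exact tendsto_inv_atTop_zero.comp
        (tendsto_atTop_add_const_right atTop 2 tendsto_natCast_atTop_atTop)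
    refine mem_closure_of_tendsto htend ?_
    filter_upwards with n
    have hpos : (0:ℝ) < ((n:ℝ) + 2)⁻¹ := by positivity
    have hlt : ((n:ℝ) + 2)⁻¹ < 1 := by
      rw [inv_lt_one_iff₀]; right; have : (0:ℝ) ≤ n := Nat.cast_nonneg n; linarith
    have hmem : ((((n:ℝ) + 2)⁻¹), (1/2:ℝ)) ∈ Set.Icc (0:ℝ) 1 ×ˢ Set.Icc (-1:ℝ) 1 := by
      simp only [Set.mem_prod, Set.mem_Icc]
      refine ⟨⟨hpos.le, hlt.le⟩, by norm_num, by norm_num⟩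
    have hFeq : F (((n:ℝ) + 2)⁻¹, (1/2:ℝ)) = fPaper (((n:ℝ) + 2)⁻¹, (1/2:ℝ)) := heq hmem
    simp only [hSdef, Set.mem_preimage, Set.mem_Iio, hFeq, fPaper]
    norm_num [hpos, hlt]
  have hmid : ((0:ℝ), (0:ℝ)) ∈ S := by
    have h := hSconv.combo_interior_closure_mem_interior
      (by rwa [hSopen.interior_eq]) hB (by norm_num : (0:ℝ) < 1/2)
      (by norm_num : (0:ℝ) ≤ 1/2) (by norm_num)
    have heqpt : ((1:ℝ)/2) • (((0:ℝ), (-1/2:ℝ))) + ((1:ℝ)/2) • (((0:ℝ), (1/2:ℝ)))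
        = ((0:ℝ), (0:ℝ)) := by
      simp only [Prod.smul_mk, smul_eq_mul, Prod.mk_add_mk]
      norm_num
    rw [heqpt] at h
    exact interior_subset h
  have hF00 : F ((0:ℝ), (0:ℝ)) = 1 := by
    have hmem : ((0:ℝ), (0:ℝ)) ∈ Set.Icc (0:ℝ) 1 ×ˢ Set.Icc (-1:ℝ) 1 := by
      simp only [Set.mem_prod, Set.mem_Icc]; norm_num
    rw [heq hmem]
    simp [fPaper]
  simp only [hSdef, Set.mem_preimage, Set.mem_Iio, hF00] at hmid
  exact lt_irrefl 1 hmid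
end

section
/- Let I ⊊ ℝ be a nonempty closed interval (possibly a point) and f : I → ℝ a quasiconvex L-Lipschitz function. Define F : ℝ → ℝ to agree with f on I and to be constant, equal to the value of f at the corresponding endpoint, on the closure of each connected component of ℝ \ I. Then F is quasiconvex and L-Lipschitz. -/
open Set

open scoped Classical in
noncomputable def proj19 (I : Set ℝ) (x : ℝ) : ℝ :=
  if (I ∩ Set.Iic x).Nonempty then sSup (I ∩ Set.Iic x) else sInf I

lemma proj19_mem (I : Set ℝ) (hne : I.Nonempty) (hclosed : IsClosed I) (x : ℝ) :
    proj19 I x ∈ I := by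
  unfold proj19
  split_ifs with h
  · exact ((hclosed.inter isClosed_Iic).csSup_mem h
      (⟨x, fun a ha => ha.2⟩)).1
  · refine hclosed.csInf_mem hne ⟨x, fun a ha => ?_⟩
    by_contra hc
    exact h ⟨a, ha, le_of_not_ge hc⟩

lemma proj19_eq_self (I : Set ℝ) {x : ℝ} (hx : x ∈ I) : proj19 I x = x := by
  unfold proj19
  rw [if_pos ⟨x, hx, le_refl x⟩]
  exact IsGreatest.csSup_eq ⟨⟨hx, le_refl x⟩, fun a ha => ha.2⟩

lemma proj19_mono_contract (I : Set ℝ) (hne : I.Nonempty) (hclosed : IsClosed I)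
    (hconv : Convex ℝ I) {x y : ℝ} (hxy : x ≤ y) :
    proj19 I x ≤ proj19 I y ∧ proj19 I y - proj19 I x ≤ y - x := by
  by_cases hy : (I ∩ Set.Iic y).Nonempty
  · have hpy_mem : proj19 I y ∈ I := proj19_mem I hne hclosed y
    have hpy_le : proj19 I y ≤ y := by
      unfold proj19
      rw [if_pos hy]
      exact csSup_le hy fun a ha => ha.2
    by_cases hle : proj19 I y ≤ x
    · have hx : (I ∩ Set.Iic x).Nonempty := ⟨proj19 I y, hpy_mem, hle⟩
      have h1 : proj19 I x ≤ proj19 I y := by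
        unfold proj19
        rw [if_pos hx, if_pos hy]
        exact csSup_le_csSup ⟨y, fun a ha => ha.2⟩ hx
          (fun a ha => ⟨ha.1, ha.2.trans hxy⟩)
      have h2 : proj19 I y ≤ proj19 I x := by
        conv_rhs => unfold proj19
        rw [if_pos hx]
        exact le_csSup ⟨x, fun a ha => ha.2⟩ ⟨hpy_mem, hle⟩
      exact ⟨h1, by linarith⟩
    · push_neg at hle
      by_cases hx : (I ∩ Set.Iic x).Nonempty
      · obtain ⟨a, haI, hax⟩ := hx
        have hxI : x ∈ I := hconv.ordConnected.out haI hpy_mem ⟨hax, hle.le⟩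
        rw [proj19_eq_self I hxI]
        exact ⟨hle.le, by linarith⟩
      · have hpx : proj19 I x = sInf I := by unfold proj19; rw [if_neg hx]
        have hlb : ∀ a ∈ I, x ≤ a := by
          intro a ha
          by_contra hc
          exact hx ⟨a, ha, le_of_not_ge hc⟩
        have h1 : x ≤ proj19 I x := by
          rw [hpx]; exact le_csInf hne hlb
        have h2 : proj19 I x ≤ proj19 I y := by
          rw [hpx]; exact csInf_le ⟨x, hlb⟩ hpy_mem
        exact ⟨h2, by linarith⟩
  · have hx : ¬(I ∩ Set.Iic x).Nonempty := fun ⟨a, ha, hax⟩ =>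
      hy ⟨a, ha, hax.trans hxy⟩
    unfold proj19
    rw [if_neg hx, if_neg hy]
    exact ⟨le_refl _, by linarith⟩

lemma proj19_mem_closure (I : Set ℝ) (hne : I.Nonempty) (hclosed : IsClosed I)
    (hconv : Convex ℝ I) {x : ℝ} (hx : x ∉ I) :
    proj19 I x ∈ closure (connectedComponentIn Iᶜ x) := by
  by_cases h : (I ∩ Set.Iic x).Nonempty
  · -- everything in I is < x
    set M := proj19 I x with hM
    have hMmem : M ∈ I := proj19_mem I hne hclosed x
    have hall : ∀ b ∈ I, b < x := by
      intro b hb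
      rcases lt_or_ge b x with h1 | h1
      · exact h1
      · obtain ⟨a, haI, hax⟩ := h
        exact absurd (hconv.ordConnected.out haI hb ⟨hax, h1⟩) hx
    have hMlt : M < x := hall M hMmem
    have hIsub : Set.Ioi M ⊆ Iᶜ := by
      intro b hb hbI
      have : b ≤ M := by
        rw [hM]
        unfold proj19
        rw [if_pos h]
        exact le_csSup ⟨x, fun a ha => ha.2⟩ ⟨hbI, (hall b hbI).le⟩
      exact absurd this (not_le.2 hb)
    have hsub : Set.Ioi M ⊆ connectedComponentIn Iᶜ x :=
      isPreconnected_Ioi.subset_connectedComponentIn hMlt hIsub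
    have : M ∈ closure (Set.Ioi M) := by rw [closure_Ioi]; exact self_mem_Ici
    exact closure_mono hsub this
  · set m := proj19 I x with hm
    have hmmem : m ∈ I := proj19_mem I hne hclosed x
    have hlb : ∀ a ∈ I, x ≤ a := by
      intro a ha
      by_contra hc
      exact h ⟨a, ha, le_of_not_ge hc⟩
    have hxm : x < m := lt_of_le_of_ne (hlb m hmmem) (fun he => hx (he ▸ hmmem))
    have hIsub : Set.Iio m ⊆ Iᶜ := by
      intro b hb hbI
      have : m ≤ b := by
        rw [hm]; unfold proj19; rw [if_neg h]
        exact csInf_le ⟨x, hlb⟩ hbI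
      exact absurd this (not_le.2 hb)
    have hsub : Set.Iio m ⊆ connectedComponentIn Iᶜ x :=
      isPreconnected_Iio.subset_connectedComponentIn hxm hIsub
    have : m ∈ closure (Set.Iio m) := by rw [closure_Iio]; exact self_mem_Iic
    exact closure_mono hsub this

theorem stmt_19 (I : Set ℝ) (hne : I.Nonempty) (hclosed : IsClosed I)
    (hconv : Convex ℝ I) (hproper : I ≠ Set.univ)
    (L : NNReal) (f : ℝ → ℝ) (hqc : QuasiconvexOn ℝ I f)
    (hlip : LipschitzOnWith L f I)
    (F : ℝ → ℝ) (hFf : Set.EqOn F f I)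
    (hFconst : ∀ z ∉ I, ∀ x ∈ closure (connectedComponentIn Iᶜ z),
      ∀ y ∈ closure (connectedComponentIn Iᶜ z), F x = F y) :
    QuasiconvexOn ℝ Set.univ F ∧ LipschitzWith L F := by
  have hFeq : ∀ x, F x = f (proj19 I x) := by
    intro x
    by_cases hx : x ∈ I
    · rw [proj19_eq_self I hx]; exact hFf hx
    · have hself : x ∈ closure (connectedComponentIn Iᶜ x) :=
        subset_closure (mem_connectedComponentIn hx)
      have hp : proj19 I x ∈ closure (connectedComponentIn Iᶜ x) :=
        proj19_mem_closure I hne hclosed hconv hx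
      rw [hFconst x hx x hself (proj19 I x) hp]
      exact hFf (proj19_mem I hne hclosed x)
  have hpmem : ∀ x, proj19 I x ∈ I := proj19_mem I hne hclosed
  have hmono : ∀ {x y : ℝ}, x ≤ y → proj19 I x ≤ proj19 I y := by
    intro x y hxy
    exact (proj19_mono_contract I hne hclosed hconv hxy).1
  have hdist : ∀ x y : ℝ, dist (proj19 I x) (proj19 I y) ≤ dist x y := by
    intro x y
    rcases le_total x y with h | h
    · obtain ⟨h1, h2⟩ := proj19_mono_contract I hne hclosed hconv h
      rw [Real.dist_eq, Real.dist_eq, abs_sub_comm, abs_of_nonneg (by linarith),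
        abs_sub_comm, abs_of_nonneg (by linarith)]
      linarith
    · obtain ⟨h1, h2⟩ := proj19_mono_contract I hne hclosed hconv h
      rw [Real.dist_eq, Real.dist_eq, abs_of_nonneg (by linarith),
        abs_of_nonneg (by linarith)]
      linarith
  constructor
  · intro c
    have hS : Convex ℝ {x ∈ I | f x ≤ c} := hqc c
    have : {x ∈ Set.univ | F x ≤ c} = proj19 I ⁻¹' {x ∈ I | f x ≤ c} := by
      ext x
      simp only [Set.mem_setOf_eq, Set.mem_preimage, Set.mem_univ, true_and]
      rw [hFeq x]
      exact ⟨fun h => ⟨hpmem x, h⟩, fun h => h.2⟩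
    rw [this]
    refine Set.OrdConnected.convex ⟨?_⟩
    intro a ha b hb z hz
    exact hS.ordConnected.out ha hb ⟨hmono hz.1, hmono hz.2⟩
  · refine LipschitzWith.of_dist_le_mul fun x y => ?_
    rw [hFeq x, hFeq y]
    calc dist (f (proj19 I x)) (f (proj19 I y))
        ≤ L * dist (proj19 I x) (proj19 I y) :=
          hlip.dist_le_mul _ (hpmem x) _ (hpmem y)
      _ ≤ L * dist x y := by
          exact mul_le_mul_of_nonneg_left (hdist x y) L.coe_nonneg
end
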